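/- arXiv:1501.05197 — 3 statements merged into one kernel-verified Lean document; each statement's English description precedes it below -/
import Mathlib

section
/- Let T be a tree with exactly one core v, where v has at least four g-legs, and let L ⊆ V be a set that contains a local set for v. Then L is a landmark set of T. -/
open SimpleGraph

variable {V : Type*} [Fintype V] [DecidableEq V]

/-- A vertex `τ` separates `u` and `w` if its distances to them differ. -/
def Separates (T : SimpleGraph V) (τ u w : V) : Prop :=
  T.dist τ u ≠ T.dist τ w

/-- There are at least two vertices of `L` separating `u` and `w`. -/
def HasTwoSeparators (T : SimpleGraph V) (L : Set V) (u w : V) : Prop :=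
  ∃ τ₁ ∈ L, ∃ τ₂ ∈ L, τ₁ ≠ τ₂ ∧ Separates T τ₁ u w ∧ Separates T τ₂ u w

/-- `L` is a landmark set (non-landmarks model, `k = 2`): every pair of distinct
vertices outside `L` is separated by at least two vertices of `L`. -/
def IsLandmarkSet (T : SimpleGraph V) (L : Set V) : Prop :=
  ∀ u w : V, u ≠ w → u ∉ L → w ∉ L → HasTwoSeparators T L u w

/-- A core is a vertex of degree at least 3. -/
def IsCore (T : SimpleGraph V) [DecidableRel T.Adj] (v : V) : Prop :=
  3 ≤ T.degree v

/-- The subtree of the neighbor `x` of `v`: in a tree, the connected component of `x`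
obtained by removing `v`, characterized via distances (`w` is in it iff the path from
`v` to `w` passes through `x`). -/
def Branch (T : SimpleGraph V) (v x : V) : Set V :=
  {w | T.dist v w = T.dist x w + 1}

/-- The subtree of the neighbor `x` of `v` is a (standard) leg:
a path containing no cores. -/
def IsStandardLeg (T : SimpleGraph V) [DecidableRel T.Adj] (v x : V) : Prop :=
  T.Adj v x ∧ ∀ w ∈ Branch T v x, T.degree w ≤ 2

/-- A short leg consists of a single vertex. -/
def IsShortLeg (T : SimpleGraph V) [DecidableRel T.Adj] (v x : V) : Prop :=
  IsStandardLeg T v x ∧ Branch T v x = {x}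

/-- A long leg is a standard leg that is not short. -/
def IsLongLeg (T : SimpleGraph V) [DecidableRel T.Adj] (v x : V) : Prop :=
  IsStandardLeg T v x ∧ Branch T v x ≠ {x}

/-- A small core: degree exactly 3, with at least two standard legs, one of which is short. -/
def IsSmallCore (T : SimpleGraph V) [DecidableRel T.Adj] (v : V) : Prop :=
  T.degree v = 3 ∧ ∃ x y : V, x ≠ y ∧ IsShortLeg T v x ∧ IsStandardLeg T v y

/-- A regular core is a core that is not small. -/
def IsRegularCore (T : SimpleGraph V) [DecidableRel T.Adj] (v : V) : Prop :=
  IsCore T v ∧ ¬ IsSmallCore T v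

/-- A modified leg of `v`: a subtree of a neighbor of `v` containing exactly one core,
which is a small core. -/
def IsModifiedLeg (T : SimpleGraph V) [DecidableRel T.Adj] (v x : V) : Prop :=
  T.Adj v x ∧ ∃ u ∈ Branch T v x, IsSmallCore T u ∧
    ∀ w ∈ Branch T v x, IsCore T w → w = u

/-- A g-leg is a standard leg or a modified leg. -/
def IsGLeg (T : SimpleGraph V) [DecidableRel T.Adj] (v x : V) : Prop :=
  IsStandardLeg T v x ∨ IsModifiedLeg T v x

/-- A minor core: a regular core which either (i) has at most one g-leg, or
(ii) has degree at least 4, no modified legs, exactly two standard legs one of which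
is short, and every other subtree of a neighbor contains a regular core. -/
def IsMinorCore (T : SimpleGraph V) [DecidableRel T.Adj] (v : V) : Prop :=
  IsRegularCore T v ∧
  ((∀ x y : V, IsGLeg T v x → IsGLeg T v y → x = y) ∨
   (4 ≤ T.degree v ∧ (∀ x : V, ¬ IsModifiedLeg T v x) ∧
    (∃ x y : V, x ≠ y ∧ IsShortLeg T v x ∧ IsStandardLeg T v y ∧
      ∀ z : V, IsStandardLeg T v z → z = x ∨ z = y) ∧
    (∀ z : V, T.Adj v z → ¬ IsGLeg T v z → ∃ w ∈ Branch T v z, IsRegularCore T w)))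

/-- A main core is a regular core that is not minor. -/
def IsMainCore (T : SimpleGraph V) [DecidableRel T.Adj] (v : V) : Prop :=
  IsRegularCore T v ∧ ¬ IsMinorCore T v

/-- The vertices lying on g-legs of `v`. -/
def GLegVerts (T : SimpleGraph V) [DecidableRel T.Adj] (v : V) : Set V :=
  {w | ∃ x : V, IsGLeg T v x ∧ w ∈ Branch T v x}

/-- Type (s,0) solution on the leg of neighbor `x` of `v`: the empty set. -/
def SolS0 (T : SimpleGraph V) (v x : V) (S : Set V) : Prop :=
  S ∩ Branch T v x = ∅

/-- Type (s,1) solution: one vertex of the leg whose position is at least 2. -/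
def SolS1 (T : SimpleGraph V) (v x : V) (S : Set V) : Prop :=
  ∃ w : V, S ∩ Branch T v x = {w} ∧ 2 ≤ T.dist v w

/-- Type (s,2) solution: at least two vertices of the leg. -/
def SolS2 (T : SimpleGraph V) (v x : V) (S : Set V) : Prop :=
  ∃ w₁ ∈ S ∩ Branch T v x, ∃ w₂ ∈ S ∩ Branch T v x, w₁ ≠ w₂

/-- Type (s,3) solution: exactly the vertex with position 1 (that is, `x`). -/
def SolS3 (T : SimpleGraph V) (v x : V) (S : Set V) : Prop :=
  S ∩ Branch T v x = {x}

/-- For a modified leg `x` of `v`: `u` is its small core (at position `T.dist v u`),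
and `a`, `b` are the two vertices at position `T.dist v u + 1`, where `b` is the
vertex of a short leg of `u` (the vertex `ℓ^b`) and `a` is the other one (`ℓ^a`). -/
def MLegPair (T : SimpleGraph V) [DecidableRel T.Adj] (v x u a b : V) : Prop :=
  u ∈ Branch T v x ∧ IsSmallCore T u ∧ a ≠ b ∧
  a ∈ Branch T v x ∧ b ∈ Branch T v x ∧
  T.dist v a = T.dist v u + 1 ∧ T.dist v b = T.dist v u + 1 ∧
  IsShortLeg T u b

/-- Type (m,1) solution on the modified leg `x` of `v`: either `{ℓ^a}` or `{ℓ^b}`. -/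
def SolM1 (T : SimpleGraph V) [DecidableRel T.Adj] (v x : V) (S : Set V) : Prop :=
  ∃ u a b : V, MLegPair T v x u a b ∧
    (S ∩ Branch T v x = {a} ∨ S ∩ Branch T v x = {b})

/-- Type (m,2) solution: contains neither `ℓ^a` nor `ℓ^b`, contains at least two
vertices of positions at least `i + 2`, and no vertex of position `i + 1`. -/
def SolM2 (T : SimpleGraph V) [DecidableRel T.Adj] (v x : V) (S : Set V) : Prop :=
  ∃ u a b : V, MLegPair T v x u a b ∧ a ∉ S ∧ b ∉ S ∧
    (∃ w₁ ∈ S ∩ Branch T v x, ∃ w₂ ∈ S ∩ Branch T v x, w₁ ≠ w₂ ∧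
      T.dist v u + 2 ≤ T.dist v w₁ ∧ T.dist v u + 2 ≤ T.dist v w₂) ∧
    ∀ w ∈ S ∩ Branch T v x, T.dist v w ≠ T.dist v u + 1

/-- Type (m,3) solution: at least two vertices, one of which is `ℓ^a` or `ℓ^b`. -/
def SolM3 (T : SimpleGraph V) [DecidableRel T.Adj] (v x : V) (S : Set V) : Prop :=
  ∃ u a b : V, MLegPair T v x u a b ∧
    (∃ w₁ ∈ S ∩ Branch T v x, ∃ w₂ ∈ S ∩ Branch T v x, w₁ ≠ w₂) ∧
    (a ∈ S ∨ b ∈ S)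

/-- `S` is a local set for the core `v`. -/
def IsLocalSet (T : SimpleGraph V) [DecidableRel T.Adj] (v : V) (S : Set V) : Prop :=
  S ⊆ GLegVerts T v ∧
  -- (1) at most one standard leg has a type (s,0) solution, and every standard leg
  -- has a solution of one of the types (s,0), (s,1), (s,2), (s,3)
  (∀ x y : V, IsStandardLeg T v x → IsStandardLeg T v y → x ≠ y →
    SolS0 T v x S → SolS0 T v y S → False) ∧
  (∀ x : V, IsStandardLeg T v x →
    SolS0 T v x S ∨ SolS1 T v x S ∨ SolS2 T v x S ∨ SolS3 T v x S) ∧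
  -- (2) every modified leg has a solution of type (m,1), (m,2) or (m,3)
  (∀ x : V, IsModifiedLeg T v x →
    SolM1 T v x S ∨ SolM2 T v x S ∨ SolM3 T v x S) ∧
  -- (3) if some standard leg has a type (s,0) solution, no modified leg has type (m,1)
  ((∃ x : V, IsStandardLeg T v x ∧ SolS0 T v x S) →
    ∀ y : V, IsModifiedLeg T v y → ¬ SolM1 T v y S) ∧
  -- (4) if some long leg has a type (s,0) solution, every other long leg has type (s,2)
  (∀ x : V, IsLongLeg T v x → SolS0 T v x S →
    ∀ y : V, IsLongLeg T v y → y ≠ x → SolS2 T v y S) ∧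
  -- (5) if some short leg has a type (s,0) solution, every long leg has type (s,2) or (s,3)
  ((∃ x : V, IsShortLeg T v x ∧ SolS0 T v x S) →
    ∀ y : V, IsLongLeg T v y → SolS2 T v y S ∨ SolS3 T v y S)

/-- A local set is thrifty if its solutions of types (s,2), (m,2) and (m,3)
consist of exactly two vertices each. -/
def IsThrifty (T : SimpleGraph V) [DecidableRel T.Adj] (v : V) (S : Set V) : Prop :=
  (∀ x : V, IsStandardLeg T v x → SolS2 T v x S → (S ∩ Branch T v x).ncard = 2) ∧
  (∀ x : V, IsModifiedLeg T v x → (SolM2 T v x S ∨ SolM3 T v x S) →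
    (S ∩ Branch T v x).ncard = 2)

namespace TreeAux
variable {T : SimpleGraph V} (hT : T.IsTree)
set_option linter.unusedSectionVars false

include hT

lemma path_len {a b : V} {p : T.Walk a b} (hp : p.IsPath) :
    p.length = T.dist a b := by
  obtain ⟨q, hq, hql⟩ := hT.isConnected.exists_path_of_dist a b
  rw [(hT.existsUnique_path a b).unique hp hq, hql]

lemma first_step {a b : V} (h : a ≠ b) :
    ∃ y, T.Adj a y ∧ T.dist a b = T.dist y b + 1 := by
  obtain ⟨p, hp, hl⟩ := hT.isConnected.exists_path_of_dist a b
  cases p with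
  | nil => exact absurd rfl h
  | @cons _ y _ hadj q =>
    refine ⟨y, hadj, ?_⟩
    rw [← hl, ← path_len hT hp.of_cons]
    simp [Walk.length_cons, Nat.add_comm]

lemma adj_dist_one {a b : V} (h : T.Adj a b) : T.dist a b = 1 :=
  dist_eq_one_iff_adj.mpr h

lemma split_dist {a b z : V} {p : T.Walk a b} (hp : p.IsPath) (hz : z ∈ p.support) :
    T.dist a z + T.dist z b = T.dist a b := by
  have h1 := p.take_spec hz
  have ht : T.dist a z ≤ (p.takeUntil z hz).length := dist_le _
  have hd : T.dist z b ≤ (p.dropUntil z hz).length := dist_le _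
  have hlen : (p.takeUntil z hz).length + (p.dropUntil z hz).length = p.length := by
    rw [← Walk.length_append, h1]
  have htri := hT.isConnected.dist_triangle (u := a) (v := z) (w := b)
  have := path_len hT hp
  omega

lemma v_notMem_branch {v x : V} : v ∉ Branch T v x := by
  intro h
  have : T.dist v v = 0 := dist_self
  have h2 : T.dist v v = T.dist x v + 1 := h
  omega

lemma branch_walk {v x u : V} (hvx : T.Adj v x) (hu : u ∈ Branch T v x) :
    ∃ q : T.Walk x u, q.IsPath ∧ q.length = T.dist x u ∧ v ∉ q.support ∧
      ∀ z ∈ q.support, z ∈ Branch T v x := by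
  obtain ⟨q, hq, hql⟩ := hT.isConnected.exists_path_of_dist x u
  have hvx1 : T.dist x v = 1 := by rw [dist_comm]; exact adj_dist_one hT hvx
  have hbu : T.dist v u = T.dist x u + 1 := hu
  have hv : v ∉ q.support := by
    intro hv
    have hs := split_dist hT hq hv
    have htri := hT.isConnected.dist_triangle (u := v) (v := x) (w := u)
    have := adj_dist_one hT hvx
    omega
  refine ⟨q, hq, hql, hv, fun z hz => ?_⟩
  have hsplit := split_dist hT hq hz
  have h1 := hT.isConnected.dist_triangle (u := v) (v := x) (w := z)
  have h2 := hT.isConnected.dist_triangle (u := v) (v := z) (w := u)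
  have := adj_dist_one hT hvx
  show T.dist v z = T.dist x z + 1
  omega

lemma branch_unique {v x y u : V} (hvx : T.Adj v x) (hvy : T.Adj v y)
    (hx : u ∈ Branch T v x) (hy : u ∈ Branch T v y) : x = y := by
  obtain ⟨qx, hqx, _, hvqx, _⟩ := branch_walk hT hvx hx
  obtain ⟨qy, hqy, _, hvqy, _⟩ := branch_walk hT hvy hy
  have hpx : (Walk.cons hvx qx).IsPath := hqx.cons hvqx
  have hpy : (Walk.cons hvy qy).IsPath := hqy.cons hvqy
  have heq := (hT.existsUnique_path v u).unique hpx hpy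
  have hs := congrArg Walk.support heq
  rw [Walk.support_cons, Walk.support_cons, qx.support_eq_cons, qy.support_eq_cons] at hs
  exact (List.cons.injEq _ _ _ _).mp ((List.cons.injEq _ _ _ _).mp hs).2 |>.1

lemma dist_cross {v x y τ u : V} (hvx : T.Adj v x) (hvy : T.Adj v y) (hxy : x ≠ y)
    (hτ : τ ∈ Branch T v y) (hu : u ∈ Branch T v x) :
    T.dist τ u = T.dist v τ + T.dist v u := by
  obtain ⟨qx, hqx, hqxl, hvqx, hqxb⟩ := branch_walk hT hvx hu
  obtain ⟨qy, hqy, hqyl, hvqy, hqyb⟩ := branch_walk hT hvy hτ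
  have hpx : (Walk.cons hvx qx).IsPath := hqx.cons hvqx
  have hpy : (Walk.cons hvy qy).IsPath := hqy.cons hvqy
  have hW : ((Walk.cons hvy qy).reverse.append (Walk.cons hvx qx)).IsPath := by
    rw [Walk.isPath_def, Walk.support_append, Walk.support_reverse]
    refine List.Nodup.append (List.nodup_reverse.mpr hpy.support_nodup)
      (by rw [Walk.support_cons, List.tail_cons]; exact hqx.support_nodup) ?_
    intro z hz1 hz2
    rw [List.mem_reverse, Walk.support_cons, List.mem_cons] at hz1
    rw [Walk.support_cons, List.tail_cons] at hz2
    rcases hz1 with rfl | hz1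
    · exact hvqx hz2
    · exact hxy (branch_unique hT hvy hvx (hqyb z hz1) (hqxb z hz2)).symm
  have hτd : T.dist v τ = T.dist y τ + 1 := hτ
  have hud : T.dist v u = T.dist x u + 1 := hu
  have hlen : ((Walk.cons hvy qy).reverse.append (Walk.cons hvx qx)).length
      = T.dist v τ + T.dist v u := by
    rw [Walk.length_append, Walk.length_reverse]
    simp only [Walk.length_cons]
    omega
  rw [← path_len hT hW, hlen]

lemma mem_branch_of_ne {v u : V} (hu : u ≠ v) : ∃ y, T.Adj v y ∧ u ∈ Branch T v y := by
  obtain ⟨y, hy, hd⟩ := first_step hT (Ne.symm hu)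
  exact ⟨y, hy, hd⟩

lemma exists_pred {v u : V} (hu : u ≠ v) :
    ∃ t, T.Adj u t ∧ T.dist v u = T.dist v t + 1 := by
  obtain ⟨t, ht, hd⟩ := first_step hT hu
  refine ⟨t, ht, ?_⟩
  rwa [dist_comm, (dist_comm : T.dist v t = _)]

end TreeAux

namespace TreeAux
variable {T : SimpleGraph V} (hT : T.IsTree)
set_option linter.unusedSectionVars false
include hT

lemma dist_ne_zero_of_ne {a b : V} (h : a ≠ b) : T.dist a b ≠ 0 :=
  fun h0 => h (hT.isConnected.dist_eq_zero_iff.mp h0)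

lemma branch_pos_inj [DecidableRel T.Adj] {v x : V} (hvx : T.Adj v x)
    (hleg : ∀ w ∈ Branch T v x, T.degree w ≤ 2) :
    ∀ p : ℕ, ∀ u w, u ∈ Branch T v x → w ∈ Branch T v x →
      T.dist v u = p → T.dist v w = p → u = w := by
  intro p
  induction p using Nat.strong_induction_on with
  | _ p IH =>
    intro u w hu hw hdu hdw
    have hbu : T.dist v u = T.dist x u + 1 := hu
    have hbw : T.dist v w = T.dist x w + 1 := hw
    by_cases hp : p ≤ 1
    · have h1 : T.dist x u = 0 := by omega
      have h2 : T.dist x w = 0 := by omega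
      exact (hT.isConnected.dist_eq_zero_iff.mp h1).symm.trans
        (hT.isConnected.dist_eq_zero_iff.mp h2)
    · -- p ≥ 2
      have hp2 : 2 ≤ p := by omega
      have huv : u ≠ v := fun h => by rw [h, SimpleGraph.dist_self] at hdu; omega
      have hwv : w ≠ v := fun h => by rw [h, SimpleGraph.dist_self] at hdw; omega
      -- predecessors
      have pred : ∀ s, s ∈ Branch T v x → T.dist v s = p →
          ∃ t, T.Adj s t ∧ T.dist v t = p - 1 ∧ t ∈ Branch T v x := by
        intro s hs hds
        have hsv : s ≠ v := fun h => by rw [h, SimpleGraph.dist_self] at hds; omega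
        obtain ⟨t, hts, hdt⟩ := exists_pred hT hsv
        have hdt' : T.dist v t = p - 1 := by omega
        have htv : t ≠ v := fun h => by rw [h, SimpleGraph.dist_self] at hdt'; omega
        obtain ⟨z, hvz, htz⟩ := mem_branch_of_ne hT htv
        refine ⟨t, hts, hdt', ?_⟩
        by_cases hzx : z = x
        · exact hzx ▸ htz
        · exfalso
          have hcross := dist_cross hT hvx hvz (fun h => hzx h.symm) htz hs
          have h1 : T.dist t s = 1 := adj_dist_one hT hts.symm
          omega
      obtain ⟨tu, htu, hdtu, htub⟩ := pred u hu hdu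
      obtain ⟨tw, htw, hdtw, htwb⟩ := pred w hw hdw
      have htuw : tu = tw := IH (p - 1) (by omega) tu tw htub htwb hdtu hdtw
      subst htuw
      by_contra huw
      -- predecessor of tu
      have htuv : tu ≠ v := fun h => by rw [h, SimpleGraph.dist_self] at hdtu; omega
      obtain ⟨s, hs, hds⟩ := exists_pred hT htuv
      have hdsv : T.dist v s = p - 2 := by omega
      have hsu : s ≠ u := fun h => by rw [h] at hdsv; omega
      have hsw : s ≠ w := fun h => by rw [h] at hdsv; omega
      have hsub : ({u, w, s} : Finset V) ⊆ T.neighborFinset tu := by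
        intro z hz
        simp only [Finset.mem_insert, Finset.mem_singleton] at hz
        rcases hz with rfl | rfl | rfl
        · exact (T.mem_neighborFinset _ _).mpr htu.symm
        · exact (T.mem_neighborFinset _ _).mpr htw.symm
        · exact (T.mem_neighborFinset _ _).mpr hs
      have hcard : ({u, w, s} : Finset V).card = 3 := by
        rw [Finset.card_insert_of_notMem (by simp [huw, Ne.symm hsu]),
          Finset.card_insert_of_notMem (by simp [Ne.symm hsw])]
        simp
      have hdeg : 3 ≤ T.degree tu := by
        rw [← hcard]; exact Finset.card_le_card hsub
      have := hleg tu htub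
      omega

end TreeAux


/-- a tree with exactly one core `v` having at least four g-legs; if `L`
contains a local set for `v`, then `L` is a landmark set. -/

theorem one_core_four_glegs_landmark
    (T : SimpleGraph V) [DecidableRel T.Adj] (hT : T.IsTree)
    (v : V) (hv : IsCore T v) (huniq : ∀ w : V, IsCore T w → w = v)
    (hlegs : ∃ x₁ x₂ x₃ x₄ : V, x₁ ≠ x₂ ∧ x₁ ≠ x₃ ∧ x₁ ≠ x₄ ∧ x₂ ≠ x₃ ∧ x₂ ≠ x₄ ∧
      x₃ ≠ x₄ ∧ IsGLeg T v x₁ ∧ IsGLeg T v x₂ ∧ IsGLeg T v x₃ ∧ IsGLeg T v x₄)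
    (L : Set V) (hloc : ∃ S : Set V, S ⊆ L ∧ IsLocalSet T v S) :
    IsLandmarkSet T L := by
  classical
  obtain ⟨S, hSL, hsub, h01, htypes, _hm, _h3, h4, h5⟩ := hloc
  obtain ⟨x₁, x₂, x₃, x₄, h12, h13, h14, h23, h24, h34, hg1, hg2, hg3, hg4⟩ := hlegs
  have hconn := hT.isConnected
  have hstd : ∀ x : V, T.Adj v x → IsStandardLeg T v x := by
    intro x hvx
    refine ⟨hvx, fun w hw => ?_⟩
    by_contra h
    push_neg at h
    have hwv : w = v := huniq w h
    subst hwv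
    exact TreeAux.v_notMem_branch hT hw
  have hglegadj : ∀ x : V, IsGLeg T v x → T.Adj v x := fun x h => by
    cases h with
    | inl h => exact h.1
    | inr h => exact h.1
  have hne0 : ∀ z : V, ¬ SolS0 T v z S → ∃ τ, τ ∈ S ∧ τ ∈ Branch T v z := by
    intro z h0
    obtain ⟨τ, hτ⟩ := Set.nonempty_iff_ne_empty.mpr h0
    exact ⟨τ, hτ.1, hτ.2⟩
  have twoLegs : ∀ c : V, ∃ z₁ z₂ : V, z₁ ≠ z₂ ∧ T.Adj v z₁ ∧ T.Adj v z₂ ∧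
      (∃ τ, τ ∈ S ∧ τ ∈ Branch T v z₁) ∧ (∃ τ, τ ∈ S ∧ τ ∈ Branch T v z₂) ∧
      z₁ ≠ c ∧ z₂ ≠ c := by
    intro c
    have pick : ∀ a b d : V, a ≠ b → a ≠ d → b ≠ d → a ≠ c → b ≠ c → d ≠ c →
        T.Adj v a → T.Adj v b → T.Adj v d →
        ∃ z₁ z₂ : V, z₁ ≠ z₂ ∧ T.Adj v z₁ ∧ T.Adj v z₂ ∧
          (∃ τ, τ ∈ S ∧ τ ∈ Branch T v z₁) ∧ (∃ τ, τ ∈ S ∧ τ ∈ Branch T v z₂) ∧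
          z₁ ≠ c ∧ z₂ ≠ c := by
      intro a b d hab had hbd hac hbc hdc hva hvb hvd
      by_cases h0a : SolS0 T v a S
      · refine ⟨b, d, hbd, hvb, hvd, hne0 b ?_, hne0 d ?_, hbc, hdc⟩
        · exact fun h0b => h01 a b (hstd a hva) (hstd b hvb) hab h0a h0b
        · exact fun h0d => h01 a d (hstd a hva) (hstd d hvd) had h0a h0d
      · by_cases h0b : SolS0 T v b S
        · refine ⟨a, d, had, hva, hvd, hne0 a h0a, hne0 d ?_, hac, hdc⟩
          exact fun h0d => h01 b d (hstd b hvb) (hstd d hvd) hbd h0b h0d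
        · exact ⟨a, b, hab, hva, hvb, hne0 a h0a, hne0 b h0b, hac, hbc⟩
    have a1 := hglegadj x₁ hg1
    have a2 := hglegadj x₂ hg2
    have a3 := hglegadj x₃ hg3
    have a4 := hglegadj x₄ hg4
    by_cases e1 : x₁ = c
    · subst e1; exact pick x₂ x₃ x₄ h23 h24 h34 h12.symm h13.symm h14.symm a2 a3 a4
    · by_cases e2 : x₂ = c
      · subst e2; exact pick x₁ x₃ x₄ h13 h14 h34 h12 h23.symm h24.symm a1 a3 a4
      · by_cases e3 : x₃ = c
        · subst e3; exact pick x₁ x₂ x₄ h12 h14 h24 h13 h23 h34.symm a1 a2 a4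
        · by_cases e4 : x₄ = c
          · subst e4; exact pick x₁ x₂ x₃ h12 h13 h23 h14 h24 h34 a1 a2 a3
          · exact pick x₁ x₂ x₃ h12 h13 h23 e1 e2 e3 a1 a2 a3
  have get_two : ∀ u w c : V,
      (∀ z τ, T.Adj v z → z ≠ c → τ ∈ S → τ ∈ Branch T v z → T.dist τ u ≠ T.dist τ w) →
      HasTwoSeparators T L u w := by
    intro u w c hsep
    obtain ⟨z₁, z₂, hzz, ha1, ha2, ⟨τ₁, hτ₁S, hτ₁B⟩, ⟨τ₂, hτ₂S, hτ₂B⟩, hz1, hz2⟩ := twoLegs c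
    refine ⟨τ₁, hSL hτ₁S, τ₂, hSL hτ₂S, ?_, hsep z₁ τ₁ ha1 hz1 hτ₁S hτ₁B,
      hsep z₂ τ₂ ha2 hz2 hτ₂S hτ₂B⟩
    intro h
    subst h
    exact hzz (TreeAux.branch_unique hT ha1 ha2 hτ₁B hτ₂B)
  have swapSep : ∀ a b : V, HasTwoSeparators T L a b → HasTwoSeparators T L b a := by
    rintro a b ⟨τ₁, hτ₁, τ₂, hτ₂, hne, hs1, hs2⟩
    exact ⟨τ₁, hτ₁, τ₂, hτ₂, hne, fun h => hs1 h.symm, fun h => hs2 h.symm⟩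
  -- the (s,0)-forces-(s,2) lemma for the equal-position cross case
  have s0s2 : ∀ x y u w : V, T.Adj v x → T.Adj v y → x ≠ y → u ∈ Branch T v x →
      w ∈ Branch T v y → T.dist v u = T.dist v w → w ∉ L → SolS0 T v x S →
      SolS2 T v y S := by
    intro x y u w hvx hvy hxy huB hwB hpq hwL h0
    have hstx := hstd x hvx
    have hsty := hstd y hvy
    have hdvy : T.dist v y = 1 := TreeAux.adj_dist_one hT hvy
    have hdvx : T.dist v x = 1 := TreeAux.adj_dist_one hT hvx
    have hyB : y ∈ Branch T v y := by
      show T.dist v y = T.dist y y + 1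
      rw [SimpleGraph.dist_self, hdvy]
    rcases htypes y hsty with h0y | h1y | h2y | h3y
    · exact absurd h0y (fun h0y => h01 x y hstx hsty hxy h0 h0y)
    · obtain ⟨ω, hSB, hω2⟩ := h1y
      have hωB : ω ∈ Branch T v y := by
        have : ω ∈ S ∩ Branch T v y := by rw [hSB]; rfl
        exact this.2
      have hωy : ω ≠ y := fun h => by rw [h, hdvy] at hω2; omega
      have hylong : IsLongLeg T v y :=
        ⟨hsty, fun h => hωy (by rw [h] at hωB; exact hωB)⟩
      by_cases hbx : Branch T v x = {x}
      · have hux : u = x := by rw [hbx] at huB; exact huB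
        have hq1 : T.dist v w = 1 := by rw [← hpq, hux, hdvx]
        have hwy : w = y :=
          TreeAux.branch_pos_inj hT hvy hsty.2 1 w y hwB hyB hq1 hdvy
        rcases h5 ⟨x, ⟨hstx, hbx⟩, h0⟩ y hylong with h2 | h3
        · exact h2
        · exfalso
          have hyS : y ∈ S ∩ Branch T v y := by rw [h3]; rfl
          exact hwL (hwy ▸ hSL hyS.1)
      · exact h4 x ⟨hstx, hbx⟩ h0 y hylong (Ne.symm hxy)
    · exact h2y
    · have hyS : y ∈ S := by
        have : y ∈ S ∩ Branch T v y := by rw [h3y]; rfl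
        exact this.1
      have hwy : w ≠ y := fun h => hwL (h ▸ hSL hyS)
      have hdyw : T.dist y w ≠ 0 := TreeAux.dist_ne_zero_of_ne hT (Ne.symm hwy)
      have hwB' : T.dist v w = T.dist y w + 1 := hwB
      have huB' : T.dist v u = T.dist x u + 1 := huB
      have hbx : Branch T v x ≠ {x} := by
        intro h
        rw [h] at huB
        have : u = x := huB
        rw [this, hdvx] at hpq
        omega
      have hby : Branch T v y ≠ {y} := by
        intro h
        rw [h] at hwB
        exact hwy hwB
      exact h4 x ⟨hstx, hbx⟩ h0 y ⟨hsty, hby⟩ (Ne.symm hxy)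
  -- separation of equal-position vertices on different legs, by landmarks on the first leg
  have sep1 : ∀ x y u w : V, T.Adj v x → T.Adj v y → x ≠ y → u ∈ Branch T v x →
      w ∈ Branch T v y → T.dist v u = T.dist v w →
      ∀ τ ∈ Branch T v x, T.dist τ u ≠ T.dist τ w := by
    intro x y u w hvx hvy hxy huB hwB hpq τ hτ
    have hcw := TreeAux.dist_cross hT hvy hvx (Ne.symm hxy) hτ hwB
    have htri := hconn.dist_triangle (u := τ) (v := x) (w := u)
    have h1 : T.dist τ x = T.dist x τ := SimpleGraph.dist_comm
    have h2 : T.dist v τ = T.dist x τ + 1 := hτ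
    have h3 : T.dist v u = T.dist x u + 1 := huB
    have h4 : T.dist v w = T.dist y w + 1 := hwB
    omega
  have caseV : ∀ w' : V, w' ≠ v → HasTwoSeparators T L v w' := by
    intro w' hwv
    obtain ⟨y, hvy, hwB⟩ := TreeAux.mem_branch_of_ne hT hwv
    apply get_two v w' y
    intro z τ hvz hzy hτS hτB
    have hcross := TreeAux.dist_cross hT hvy hvz (Ne.symm hzy) hτB hwB
    have h1 : T.dist τ v = T.dist v τ := SimpleGraph.dist_comm
    have h2 : T.dist v w' = T.dist y w' + 1 := hwB
    omega
  have caseLT : ∀ x y u w : V, T.Adj v x → T.Adj v y → x ≠ y → u ∈ Branch T v x →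
      w ∈ Branch T v y → T.dist v u < T.dist v w → HasTwoSeparators T L u w := by
    intro x y u w hvx hvy hxy huB hwB hlt
    apply get_two u w y
    intro z τ hvz hzy hτS hτB
    have hcw := TreeAux.dist_cross hT hvy hvz (Ne.symm hzy) hτB hwB
    have htri := hconn.dist_triangle (u := τ) (v := v) (w := u)
    have hcm : T.dist τ v = T.dist v τ := SimpleGraph.dist_comm
    omega
  intro u w hne huL hwL
  by_cases huv : u = v
  · rw [huv]
    exact caseV w (fun h => hne (huv.trans h.symm))
  · by_cases hwv : w = v
    · rw [hwv]
      exact swapSep v u (caseV u huv)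
    · obtain ⟨x, hvx, huB⟩ := TreeAux.mem_branch_of_ne hT huv
      obtain ⟨y, hvy, hwB⟩ := TreeAux.mem_branch_of_ne hT hwv
      by_cases hxy : x = y
      · subst hxy
        have hpq : T.dist v u ≠ T.dist v w := fun h =>
          hne (TreeAux.branch_pos_inj hT hvx (hstd x hvx).2 (T.dist v u) u w huB hwB rfl h.symm)
        apply get_two u w x
        intro z τ hvz hzx hτS hτB
        have hc1 := TreeAux.dist_cross hT hvx hvz (Ne.symm hzx) hτB huB
        have hc2 := TreeAux.dist_cross hT hvx hvz (Ne.symm hzx) hτB hwB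
        omega
      · rcases lt_trichotomy (T.dist v u) (T.dist v w) with hlt | heq | hgt
        · exact caseLT x y u w hvx hvy hxy huB hwB hlt
        · by_cases h0x : SolS0 T v x S
          · obtain ⟨w₁, hw₁, w₂, hw₂, hww⟩ := s0s2 x y u w hvx hvy hxy huB hwB heq hwL h0x
            exact ⟨w₁, hSL hw₁.1, w₂, hSL hw₂.1, hww,
              fun h => sep1 y x w u hvy hvx (Ne.symm hxy) hwB huB heq.symm w₁ hw₁.2 h.symm,
              fun h => sep1 y x w u hvy hvx (Ne.symm hxy) hwB huB heq.symm w₂ hw₂.2 h.symm⟩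
          · by_cases h0y : SolS0 T v y S
            · obtain ⟨w₁, hw₁, w₂, hw₂, hww⟩ :=
                s0s2 y x w u hvy hvx (Ne.symm hxy) hwB huB heq.symm huL h0y
              exact ⟨w₁, hSL hw₁.1, w₂, hSL hw₂.1, hww,
                sep1 x y u w hvx hvy hxy huB hwB heq w₁ hw₁.2,
                sep1 x y u w hvx hvy hxy huB hwB heq w₂ hw₂.2⟩
            · obtain ⟨τ₁, hτ₁S, hτ₁B⟩ := hne0 x h0x
              obtain ⟨τ₂, hτ₂S, hτ₂B⟩ := hne0 y h0y
              refine ⟨τ₁, hSL hτ₁S, τ₂, hSL hτ₂S, ?_,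
                sep1 x y u w hvx hvy hxy huB hwB heq τ₁ hτ₁B,
                fun h => sep1 y x w u hvy hvx (Ne.symm hxy) hwB huB heq.symm τ₂ hτ₂B h.symm⟩
              intro h
              subst h
              exact hxy (TreeAux.branch_unique hT hvx hvy hτ₁B hτ₂B)
        · exact swapSep w u (caseLT y x w u hvy hvx (Ne.symm hxy) hwB huB hgt)
end

section
/- Let T be a tree with exactly one core v, where v has at least three g-legs, and let L ⊆ V be a set that contains a local set for v and contains the vertex v itself. Then L is a landmark set of T. -/
open SimpleGraph

variable {V : Type*} [Fintype V] [DecidableEq V]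

section TreeAux
set_option linter.unusedSectionVars false

variable {V : Type*} [Fintype V] [DecidableEq V] {T : SimpleGraph V}

lemma path_length_eq (hT : T.IsTree) {a b : V} {p : T.Walk a b} (hp : p.IsPath) :
    p.length = T.dist a b := by
  obtain ⟨q, hq⟩ := hT.isConnected.exists_walk_length_eq_dist a b
  obtain ⟨r, -, hr⟩ := hT.existsUnique_path a b
  have h1 : p = q.bypass := (hr p hp).trans (hr q.bypass q.bypass_isPath).symm
  have h2 := Walk.length_bypass_le q
  have h3 := SimpleGraph.dist_le p
  rw [h1] at h3 ⊢; omega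

lemma split_dist (hT : T.IsTree) {a b z : V} {p : T.Walk a b} (hp : p.IsPath)
    (hz : z ∈ p.support) : T.dist a z + T.dist z b = T.dist a b := by
  have h1 := path_length_eq hT (hp.takeUntil hz)
  have h2 := path_length_eq hT (hp.dropUntil hz)
  have h3 := path_length_eq hT hp
  have h4 := congrArg Walk.length (p.take_spec hz)
  rw [Walk.length_append] at h4
  omega

lemma exists_path (hT : T.IsTree) (a b : V) : ∃ p : T.Walk a b, p.IsPath := by
  obtain ⟨q, -⟩ := hT.isConnected.exists_walk_length_eq_dist a b
  exact ⟨q.bypass, q.bypass_isPath⟩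

lemma exists_pred (hT : T.IsTree) {s a : V} (h : a ≠ s) :
    ∃ a', T.Adj a' a ∧ T.dist s a' + 1 = T.dist s a := by
  obtain ⟨p, hp⟩ := exists_path hT a s
  obtain ⟨x, hadj, p', hpe⟩ := Walk.exists_eq_cons_of_ne h p
  have hp' : p'.IsPath := by rw [hpe] at hp; exact hp.of_cons
  have e1 := path_length_eq hT hp'
  have e2 := path_length_eq hT hp
  rw [hpe, Walk.length_cons] at e2
  have c1 : T.dist s x = T.dist x s := SimpleGraph.dist_comm
  have c2 : T.dist s a = T.dist a s := SimpleGraph.dist_comm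
  exact ⟨x, hadj.symm, by omega⟩

lemma branch_ne {v x z : V} (hz : z ∈ Branch T v x) : z ≠ v := by
  intro h
  subst h
  simp only [Branch, Set.mem_setOf_eq, SimpleGraph.dist_self] at hz
  omega

lemma branch_exists (hT : T.IsTree) {v u : V} (h : u ≠ v) :
    ∃ x, T.Adj v x ∧ u ∈ Branch T v x := by
  obtain ⟨x, hadj, hd⟩ := exists_pred hT (Ne.symm h)
  refine ⟨x, hadj.symm, ?_⟩
  simp only [Branch, Set.mem_setOf_eq]
  have c1 : T.dist u x = T.dist x u := SimpleGraph.dist_comm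
  have c2 : T.dist u v = T.dist v u := SimpleGraph.dist_comm
  omega

lemma branch_cons_path (hT : T.IsTree) {v x t : V} (hvx : T.Adj v x)
    (ht : t ∈ Branch T v x) :
    ∃ p1 : T.Walk x t, p1.IsPath ∧ v ∉ p1.support := by
  obtain ⟨p1, hp1⟩ := exists_path hT x t
  refine ⟨p1, hp1, fun hv => ?_⟩
  have h0 := split_dist hT hp1 hv
  have h1 : T.dist x v = 1 := SimpleGraph.dist_eq_one_iff_adj.mpr hvx.symm
  simp only [Branch, Set.mem_setOf_eq] at ht
  omega

lemma mem_branch_of_mem_support (hT : T.IsTree) {v x t : V} (hvx : T.Adj v x)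
    (ht : t ∈ Branch T v x) {p : T.Walk v t} (hp : p.IsPath) {z : V}
    (hz : z ∈ p.support) (hzv : z ≠ v) : z ∈ Branch T v x := by
  obtain ⟨p1, hp1, hvp1⟩ := branch_cons_path hT hvx ht
  have hcons : (Walk.cons hvx p1).IsPath := hp1.cons hvp1
  obtain ⟨r, -, hr⟩ := hT.existsUnique_path v t
  have hpe : p = Walk.cons hvx p1 := (hr p hp).trans (hr _ hcons).symm
  rw [hpe] at hz
  have hz1 : z ∈ p1.support := by
    rw [Walk.support_cons] at hz
    rcases List.mem_cons.mp hz with h | h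
    · exact absurd h hzv
    · exact h
  have e1 := split_dist hT hp1 hz1
  have e2 := split_dist hT hcons (by rw [Walk.support_cons]; exact List.mem_cons_of_mem _ hz1)
  simp only [Branch, Set.mem_setOf_eq] at ht ⊢
  omega

lemma branch_eq_of_mem (hT : T.IsTree) {v x y z : V} (hvx : T.Adj v x) (hvy : T.Adj v y)
    (hx : z ∈ Branch T v x) (hy : z ∈ Branch T v y) : x = y := by
  obtain ⟨p1, hp1, hv1⟩ := branch_cons_path hT hvx hx
  obtain ⟨p2, hp2, hv2⟩ := branch_cons_path hT hvy hy
  obtain ⟨r, -, hr⟩ := hT.existsUnique_path v z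
  have heq : Walk.cons hvx p1 = Walk.cons hvy p2 :=
    (hr _ (hp1.cons hv1)).trans (hr _ (hp2.cons hv2)).symm
  have hs := congrArg Walk.support heq
  rw [Walk.support_cons, Walk.support_cons, p1.support_eq_cons, p2.support_eq_cons] at hs
  exact (List.cons_eq_cons.mp (List.cons_eq_cons.mp hs).2).1

lemma dist_add_of_branches (hT : T.IsTree) {v x τ u : V} (hvx : T.Adj v x)
    (hτ : τ ∈ Branch T v x) (huv : u ≠ v) (hu : u ∉ Branch T v x) :
    T.dist τ u = T.dist τ v + T.dist v u := by
  obtain ⟨y, hvy, huy⟩ := branch_exists hT huv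
  obtain ⟨P, hP⟩ := exists_path hT v τ
  obtain ⟨Q, hQ⟩ := exists_path hT v u
  have hpath : (P.reverse.append Q).IsPath := by
    rw [Walk.isPath_def, Walk.support_append, Walk.support_reverse]
    apply List.Nodup.append
    · exact List.nodup_reverse.mpr hP.support_nodup
    · have := hQ.support_nodup
      rw [Q.support_eq_cons] at this
      exact (List.nodup_cons.mp this).2
    · intro z hz1 hz2
      have hzP : z ∈ P.support := List.mem_reverse.mp hz1
      have hzv : z ≠ v := by
        have hnd := hQ.support_nodup
        rw [Q.support_eq_cons] at hnd
        intro h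
        subst h
        exact (List.nodup_cons.mp hnd).1 hz2
      have hzQ : z ∈ Q.support := by
        rw [Q.support_eq_cons]
        exact List.mem_cons_of_mem _ hz2
      have h1 := mem_branch_of_mem_support hT hvx hτ hP hzP hzv
      have h2 := mem_branch_of_mem_support hT hvy huy hQ hzQ hzv
      exact hu ((branch_eq_of_mem hT hvx hvy h1 h2) ▸ huy)
  have hl := path_length_eq hT hpath
  rw [Walk.length_append, Walk.length_reverse] at hl
  have l1 := path_length_eq hT hP
  have l2 := path_length_eq hT hQ
  have c1 : T.dist τ v = T.dist v τ := SimpleGraph.dist_comm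
  omega

lemma same_branch_close (hT : T.IsTree) {v x τ w : V} (hτ : τ ∈ Branch T v x)
    (hw : w ∈ Branch T v x) : T.dist τ w + 2 ≤ T.dist τ v + T.dist v w := by
  have h := hT.isConnected.dist_triangle (u := τ) (v := x) (w := w)
  have c1 : T.dist τ x = T.dist x τ := SimpleGraph.dist_comm
  have c2 : T.dist τ v = T.dist v τ := SimpleGraph.dist_comm
  simp only [Branch, Set.mem_setOf_eq] at hτ hw
  omega

lemma eq_of_dist_one (hT : T.IsTree) {v x u : V} (hu : u ∈ Branch T v x)
    (h1 : T.dist v u = 1) : u = x := by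
  simp only [Branch, Set.mem_setOf_eq] at hu
  have : T.dist x u = 0 := by omega
  exact ((hT.isConnected.dist_eq_zero_iff).mp this).symm


lemma eq_of_same_branch (hT : T.IsTree) [DecidableRel T.Adj] {v x : V} (hvx : T.Adj v x)
    (hdeg : ∀ z ∈ Branch T v x, T.degree z ≤ 2) :
    ∀ (q : ℕ) (a b : V), a ∈ Branch T v x → b ∈ Branch T v x →
      T.dist v a = q → T.dist v b = q → a = b := by
  intro q
  induction q using Nat.strong_induction_on with
  | _ q ih =>
  intro a b ha hb hqa hqb
  rcases Nat.lt_or_ge q 2 with hq | hq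
  · rcases Nat.lt_or_ge q 1 with hq0 | hq1
    · exfalso
      have h0 : T.dist v a = 0 := by omega
      exact (branch_ne ha) ((hT.isConnected.dist_eq_zero_iff.mp h0)).symm
    · have e1 : a = x := eq_of_dist_one hT ha (by omega)
      have e2 : b = x := eq_of_dist_one hT hb (by omega)
      rw [e1, e2]
  · have hav : a ≠ v := branch_ne ha
    have hbv : b ≠ v := branch_ne hb
    obtain ⟨a', haa, hda⟩ := exists_pred hT hav
    obtain ⟨b', hbb, hdb⟩ := exists_pred hT hbv
    have key : ∀ c c' : V, c ∈ Branch T v x → T.dist v c = q → T.Adj c' c →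
        T.dist v c' + 1 = q → c' ∈ Branch T v x := by
      intro c c' hc hdc hadj hd'
      by_contra hn
      have hcv' : c' ≠ v := by
        intro h; subst h; rw [SimpleGraph.dist_self] at hd'; omega
      have e := dist_add_of_branches hT hvx hc hcv' hn
      have h1 : T.dist c c' = 1 := SimpleGraph.dist_eq_one_iff_adj.mpr hadj.symm
      have c1 : T.dist c v = T.dist v c := SimpleGraph.dist_comm
      omega
    have ha' := key a a' ha hqa haa (by omega)
    have hb' := key b b' hb hqb hbb (by omega)
    have hab' : a' = b' := ih (q-1) (by omega) a' b' ha' hb' (by omega) (by omega)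
    by_contra hab
    have hzv : a' ≠ v := branch_ne ha'
    obtain ⟨z', hzz, hdz⟩ := exists_pred hT hzv
    have hsub : ({a, b, z'} : Finset V) ⊆ T.neighborFinset a' := by
      intro t ht
      rw [SimpleGraph.mem_neighborFinset]
      rcases Finset.mem_insert.mp ht with h | h
      · subst h; exact haa
      rcases Finset.mem_insert.mp h with h | h
      · subst h; rw [hab']; exact hbb
      · rw [Finset.mem_singleton] at h; subst h; exact hzz.symm
    have haz : a ≠ z' := by intro h; subst h; omega
    have hbz : b ≠ z' := by intro h; subst h; omega
    have hcard : ({a, b, z'} : Finset V).card = 3 := by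
      rw [Finset.card_insert_of_notMem (by simp [hab, haz]),
        Finset.card_insert_of_notMem (by simp [hbz]), Finset.card_singleton]
    have h3 : 3 ≤ T.degree a' := hcard ▸ Finset.card_le_card hsub
    have := hdeg a' ha'
    omega

lemma std_leg (hT : T.IsTree) [DecidableRel T.Adj] {v : V}
    (huniq : ∀ w, IsCore T w → w = v) {x : V} (hvx : T.Adj v x) :
    IsStandardLeg T v x := by
  refine ⟨hvx, fun z hz => ?_⟩
  by_contra h
  push_neg at h
  exact branch_ne hz (huniq z (by unfold IsCore; omega))

lemma h2s_symm {L : Set V} {u w : V} (h : HasTwoSeparators T L u w) :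
    HasTwoSeparators T L w u := by
  obtain ⟨t1, h1, t2, h2, hne, s1, s2⟩ := h
  exact ⟨t1, h1, t2, h2, hne, Ne.symm s1, Ne.symm s2⟩


lemma auxA (hT : T.IsTree) [DecidableRel T.Adj] {v : V}
    (huniq : ∀ w, IsCore T w → w = v)
    (hlegs : ∃ x₁ x₂ x₃ : V, x₁ ≠ x₂ ∧ x₁ ≠ x₃ ∧ x₂ ≠ x₃ ∧
      IsGLeg T v x₁ ∧ IsGLeg T v x₂ ∧ IsGLeg T v x₃)
    {L S : Set V} (hSL : S ⊆ L) (hS : IsLocalSet T v S) (hvL : v ∈ L)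
    {u w xu : V} (hvxu : T.Adj v xu) (hu : u ∈ Branch T v xu)
    (hwv : w ≠ v) (hlt : T.dist v w < T.dist v u) :
    HasTwoSeparators T L u w := by
  obtain ⟨x₁, x₂, x₃, h12, h13, h23, g1, g2, g3⟩ := hlegs
  have A1 : T.Adj v x₁ := g1.elim (fun h => h.1) (fun h => h.1)
  have A2 : T.Adj v x₂ := g2.elim (fun h => h.1) (fun h => h.1)
  have A3 : T.Adj v x₃ := g3.elim (fun h => h.1) (fun h => h.1)
  have key : ∃ y, T.Adj v y ∧ y ≠ xu ∧ (S ∩ Branch T v y).Nonempty := by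
    obtain ⟨a, b, hab, ha, hb⟩ :
        ∃ a b : V, a ≠ b ∧ (T.Adj v a ∧ a ≠ xu) ∧ (T.Adj v b ∧ b ≠ xu) := by
      by_cases e1 : x₁ = xu
      · exact ⟨x₂, x₃, h23, ⟨A2, by rw [← e1]; exact h12.symm⟩,
          ⟨A3, by rw [← e1]; exact h13.symm⟩⟩
      · by_cases e2 : x₂ = xu
        · exact ⟨x₁, x₃, h13, ⟨A1, e1⟩, ⟨A3, by rw [← e2]; exact h23.symm⟩⟩
        · exact ⟨x₁, x₂, h12, ⟨A1, e1⟩, ⟨A2, e2⟩⟩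
    by_cases hSa : S ∩ Branch T v a = ∅
    · refine ⟨b, hb.1, hb.2, ?_⟩
      rw [Set.nonempty_iff_ne_empty]
      intro hSb
      exact hS.2.1 a b (std_leg hT huniq ha.1) (std_leg hT huniq hb.1) hab hSa hSb
    · exact ⟨a, ha.1, ha.2, Set.nonempty_iff_ne_empty.mpr hSa⟩
  obtain ⟨y, hvy, hyne, τ, hτS, hτB⟩ := key
  have hτv : τ ≠ v := branch_ne hτB
  have huv : u ≠ v := branch_ne hu
  have huB : u ∉ Branch T v y := fun h => hyne (branch_eq_of_mem hT hvy hvxu h hu)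
  have e1 : T.dist τ u = T.dist τ v + T.dist v u :=
    dist_add_of_branches hT hvy hτB huv huB
  refine ⟨v, hvL, τ, hSL hτS, Ne.symm hτv, by unfold Separates; omega, ?_⟩
  by_cases hwB : w ∈ Branch T v y
  · have e2 := same_branch_close hT hτB hwB
    unfold Separates; omega
  · have e2 := dist_add_of_branches hT hvy hτB hwv hwB
    unfold Separates; omega

lemma auxC (hT : T.IsTree) {v : V} {L S : Set V} (hSL : S ⊆ L)
    {u w xu xw : V} (hvxu : T.Adj v xu) (hvxw : T.Adj v xw)
    (hu : u ∈ Branch T v xu) (hw : w ∈ Branch T v xw)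
    (hne : xu ≠ xw) (heq : T.dist v u = T.dist v w)
    (h1 : (S ∩ Branch T v xu).Nonempty) (h2 : (S ∩ Branch T v xw).Nonempty) :
    HasTwoSeparators T L u w := by
  obtain ⟨τ₁, hτ₁⟩ := h1
  obtain ⟨τ₂, hτ₂⟩ := h2
  have hττ : τ₁ ≠ τ₂ := fun h => hne (branch_eq_of_mem hT hvxu hvxw hτ₁.2 (h ▸ hτ₂.2))
  have hwBu : w ∉ Branch T v xu := fun h => hne (branch_eq_of_mem hT hvxu hvxw h hw)
  have huBw : u ∉ Branch T v xw := fun h => hne (branch_eq_of_mem hT hvxu hvxw hu h)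
  refine ⟨τ₁, hSL hτ₁.1, τ₂, hSL hτ₂.1, hττ, ?_, ?_⟩
  · have e1 := same_branch_close hT hτ₁.2 hu
    have e2 := dist_add_of_branches hT hvxu hτ₁.2 (branch_ne hw) hwBu
    unfold Separates; omega
  · have e1 := same_branch_close hT hτ₂.2 hw
    have e2 := dist_add_of_branches hT hvxw hτ₂.2 (branch_ne hu) huBw
    unfold Separates; omega

lemma auxB (hT : T.IsTree) [DecidableRel T.Adj] {v : V}
    (huniq : ∀ w, IsCore T w → w = v)
    {L S : Set V} (hSL : S ⊆ L) (hS : IsLocalSet T v S)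
    {u w xu xw : V} (hvxu : T.Adj v xu) (hvxw : T.Adj v xw)
    (hu : u ∈ Branch T v xu) (hw : w ∈ Branch T v xw) (hwL : w ∉ L)
    (hne : xu ≠ xw) (heq : T.dist v u = T.dist v w)
    (hempty : S ∩ Branch T v xu = ∅) : HasTwoSeparators T L u w := by
  obtain ⟨hsub, h1, h2, h3, h4, h5, h6⟩ := hS
  have stdu := std_leg hT huniq hvxu
  have stdw := std_leg hT huniq hvxw
  have singleton_contra : Branch T v xw = {xw} → w = xw → False := by
    intro hlw hw1
    rcases h2 xw stdw with h | h | h | h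
    · exact h1 xu xw stdu stdw hne hempty h
    · obtain ⟨z, hz, hz2⟩ := h
      have hzB : z ∈ Branch T v xw := (show z ∈ S ∩ Branch T v xw by rw [hz]; rfl).2
      rw [hlw, Set.mem_singleton_iff] at hzB
      have : T.dist v z = 1 := by
        rw [hzB]; exact SimpleGraph.dist_eq_one_iff_adj.mpr hvxw
      omega
    · obtain ⟨w₁, hw₁, w₂, hw₂, hww⟩ := h
      have e₁ := hw₁.2; have e₂ := hw₂.2
      rw [hlw, Set.mem_singleton_iff] at e₁ e₂
      exact hww (e₁.trans e₂.symm)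
    · have : xw ∈ S := (show xw ∈ S ∩ Branch T v xw by rw [h]; rfl).1
      exact hwL (hSL (hw1 ▸ this))
  have key : ∃ τ₁ ∈ S ∩ Branch T v xw, ∃ τ₂ ∈ S ∩ Branch T v xw, τ₁ ≠ τ₂ := by
    by_cases hlu : Branch T v xu = {xu}
    · have hu1 : u = xu := by rw [hlu] at hu; exact hu
      have hq : T.dist v u = 1 := by
        rw [hu1]; exact SimpleGraph.dist_eq_one_iff_adj.mpr hvxu
      have hw1 : w = xw := eq_of_dist_one hT hw (by omega)
      by_cases hlw : Branch T v xw = {xw}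
      · exact absurd (singleton_contra hlw hw1) not_false
      · rcases h6 ⟨xu, ⟨stdu, hlu⟩, hempty⟩ xw ⟨stdw, hlw⟩ with h | h
        · exact h
        · exfalso
          have : xw ∈ S := (show xw ∈ S ∩ Branch T v xw by rw [h]; rfl).1
          exact hwL (hSL (hw1 ▸ this))
    · by_cases hlw : Branch T v xw = {xw}
      · have hw1 : w = xw := by rw [hlw] at hw; exact hw
        exact absurd (singleton_contra hlw hw1) not_false
      · exact h5 xu ⟨stdu, hlu⟩ hempty xw ⟨stdw, hlw⟩ (Ne.symm hne)
  obtain ⟨τ₁, hτ₁, τ₂, hτ₂, hττ⟩ := key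
  have huv : u ≠ v := branch_ne hu
  have hUB : u ∉ Branch T v xw := fun h => hne (branch_eq_of_mem hT hvxu hvxw hu h)
  refine ⟨τ₁, hSL hτ₁.1, τ₂, hSL hτ₂.1, hττ, ?_, ?_⟩
  · have e1 := dist_add_of_branches hT hvxw hτ₁.2 huv hUB
    have e2 := same_branch_close hT hτ₁.2 hw
    unfold Separates; omega
  · have e1 := dist_add_of_branches hT hvxw hτ₂.2 huv hUB
    have e2 := same_branch_close hT hτ₂.2 hw
    unfold Separates; omega

end TreeAux

/-- a tree with exactly one core `v` having at least three g-legs; if `L`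
contains a local set for `v` and contains `v` itself, then `L` is a landmark set. -/
theorem one_core_containing_core_landmark
    (T : SimpleGraph V) [DecidableRel T.Adj] (hT : T.IsTree)
    (v : V) (hv : IsCore T v) (huniq : ∀ w : V, IsCore T w → w = v)
    (hlegs : ∃ x₁ x₂ x₃ : V, x₁ ≠ x₂ ∧ x₁ ≠ x₃ ∧ x₂ ≠ x₃ ∧
      IsGLeg T v x₁ ∧ IsGLeg T v x₂ ∧ IsGLeg T v x₃)
    (L : Set V) (hloc : ∃ S : Set V, S ⊆ L ∧ IsLocalSet T v S) (hvL : v ∈ L) :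
    IsLandmarkSet T L := by
  intro u w hne huL hwL
  obtain ⟨S, hSL, hS⟩ := hloc
  have huv : u ≠ v := fun h => huL (h ▸ hvL)
  have hwv : w ≠ v := fun h => hwL (h ▸ hvL)
  obtain ⟨xu, hvxu, hu⟩ := branch_exists hT huv
  obtain ⟨xw, hvxw, hw⟩ := branch_exists hT hwv
  rcases lt_trichotomy (T.dist v w) (T.dist v u) with h | h | h
  · exact auxA hT huniq hlegs hSL hS hvL hvxu hu hwv h
  · have hxuw : xu ≠ xw := by
      intro hh
      subst hh
      refine hne (eq_of_same_branch hT hvxu (fun z hz => ?_) (T.dist v u) u w hu hw rfl h)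
      by_contra hdeg
      push_neg at hdeg
      exact branch_ne hz (huniq z (by unfold IsCore; omega))
    by_cases he1 : S ∩ Branch T v xu = ∅
    · exact auxB hT huniq hSL hS hvxu hvxw hu hw hwL hxuw h.symm he1
    · by_cases he2 : S ∩ Branch T v xw = ∅
      · exact h2s_symm (auxB hT huniq hSL hS hvxw hvxu hw hu huL (Ne.symm hxuw) h he2)
      · exact auxC hT hSL hvxu hvxw hu hw hxuw h.symm
          (Set.nonempty_iff_ne_empty.mpr he1) (Set.nonempty_iff_ne_empty.mpr he2)
  · exact h2s_symm (auxA hT huniq hlegs hSL hS hvL hvxw hw huv h)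
end

section
/- Let T be a tree that has at least one regular core, and let L ⊆ V be a set such that for every regular core v of T, the subset of L restricted to the vertices of the g-legs of v is a local set for v. Then L is a landmark set of T. -/
open SimpleGraph

variable {V : Type*} [Fintype V] [DecidableEq V]

/-!
Let `u ≠ w` lie outside `L`. Distances in a tree satisfy `d(x,u) + d(x,w) ≡ d(u,w) (mod 2)`,
so if `d(u,w)` is odd every vertex separates `u` and `w`, and two vertices of `L` suffice.
If `d(u,w) = 2k`, let `m` be the midpoint and `p`, `q` its neighbours towards `u` and `w`:
every vertex of the branches at `p` and `q` separates `u` and `w`, and we find two vertices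
of `L` there. A branch containing a regular core contains two vertices of `L`: the branches of
its regular core farthest from `m` that point away from `m` are g-legs, and the local set
conditions (1)–(4) place two vertices in them. Otherwise `m` is a core whose branches at `p`
and `q` are g-legs. If `m` is regular, the local set at `m` does it, because `u` and `w` sit
at the same depth and are not in `L` (this is where condition (5) enters). If `m` is small,
then `u = p` and `w = q`, and `m` lies on a modified leg of a nearest regular core; the
solution there cannot contain `p` or `q`, so it has type (m,2), whose two deep vertices lie
below `p` and `q`.
-/

namespace SimpleGraph

variable {α : Type*} {G : SimpleGraph α} {a b c u w z : α}

lemma IsTree.length_eq_dist (hG : G.IsTree) {p : G.Walk a b} (hp : p.IsPath) :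
    p.length = G.dist a b := by
  obtain ⟨q, hq, hql⟩ := hG.connected.exists_path_of_dist a b
  rwa [(hG.existsUnique_path a b).unique hp hq]

lemma IsTree.dist_add_dist_of_mem_support (hG : G.IsTree) {p : G.Walk a b} (hp : p.IsPath)
    (hc : c ∈ p.support) : G.dist a c + G.dist c b = G.dist a b := by
  classical
  rw [← hG.length_eq_dist (hp.takeUntil hc), ← hG.length_eq_dist (hp.dropUntil hc),
    ← Walk.length_append, Walk.take_spec, hG.length_eq_dist hp]

lemma Walk.IsPath.append {p : G.Walk a z} {q : G.Walk z c} (hp : p.IsPath) (hq : q.IsPath)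
    (h : ∀ t ∈ p.support, t ∈ q.support → t = z) : (p.append q).IsPath := by
  have hq' := hq.support_nodup
  rw [← Walk.cons_tail_support q, List.nodup_cons] at hq'
  rw [Walk.isPath_def, Walk.support_append, List.nodup_append]
  refine ⟨hp.support_nodup, hq'.2, fun t ht t' ht' htt' => ?_⟩
  subst htt'
  exact hq'.1 (h t ht (List.mem_of_mem_tail ht') ▸ ht')

lemma IsTree.dist_eq_add_of_forall_mem_support (hG : G.IsTree) {p : G.Walk a z}
    (hp : p.IsPath) (hmin : ∀ t ∈ p.support, G.dist z c ≤ G.dist t c) :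
    G.dist a c = G.dist a z + G.dist z c := by
  obtain ⟨q, hq, hql⟩ := hG.connected.exists_path_of_dist z c
  have hpq : (p.append q).IsPath := hp.append hq fun t htp htq => by
    have := hG.dist_add_dist_of_mem_support hq htq
    have := hmin t htp
    exact ((hG.connected.dist_eq_zero_iff).mp (by omega)).symm
  rw [← hG.length_eq_dist hpq, Walk.length_append, hG.length_eq_dist hp, hql]

lemma IsTree.exists_median (hG : G.IsTree) (a b c : α) :
    ∃ z, G.dist a b = G.dist a z + G.dist z b ∧ G.dist a c = G.dist a z + G.dist z c ∧
      G.dist b c = G.dist b z + G.dist z c := by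
  classical
  obtain ⟨p, hp, -⟩ := hG.connected.exists_path_of_dist a b
  obtain ⟨z, hz, hmin⟩ := p.support.toFinset.exists_min_image (G.dist · c)
    ⟨a, by simp⟩
  rw [List.mem_toFinset] at hz
  simp only [List.mem_toFinset] at hmin
  have hab := hG.dist_add_dist_of_mem_support hp hz
  have hac := hG.dist_eq_add_of_forall_mem_support (hp.takeUntil hz)
    fun t ht => hmin t (p.support_takeUntil_subset_support hz ht)
  have hbc := hG.dist_eq_add_of_forall_mem_support (hp.dropUntil hz).reverse fun t ht =>
    hmin t (p.support_dropUntil_subset_support hz (by simpa using ht))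
  exact ⟨z, hab.symm, hac, by rw [hbc, dist_comm]⟩

lemma Connected.exists_adj_dist_eq_add_one (hG : G.Connected) (h : u ≠ w) :
    ∃ x, G.Adj u x ∧ G.dist u w = G.dist x w + 1 := by
  obtain ⟨p, hp, hl⟩ := hG.exists_path_of_dist u w
  cases p with
  | nil => exact absurd rfl h
  | @cons _ x _ hadj q =>
    have hq := dist_le q
    have htri : G.dist u w ≤ G.dist u x + G.dist x w := hG.dist_triangle
    rw [dist_eq_one_iff_adj.mpr hadj] at htri
    rw [Walk.length_cons] at hl
    exact ⟨_, hadj, by omega⟩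

lemma IsTree.eq_of_adj_of_dist_eq_add_one (hG : G.IsTree) {v x y : α} (hx : G.Adj v x)
    (hy : G.Adj v y) (hxw : G.dist v w = G.dist x w + 1) (hyw : G.dist v w = G.dist y w + 1) :
    x = y := by
  obtain ⟨p, -, hp⟩ := hG.connected.exists_path_of_dist x w
  obtain ⟨q, -, hq⟩ := hG.connected.exists_path_of_dist y w
  have hpath : ∀ {x} (hx : G.Adj v x) (p : G.Walk x w), p.length = G.dist x w →
      G.dist v w = G.dist x w + 1 → (Walk.cons hx p).IsPath := fun hx p hp h =>
    Walk.isPath_of_length_eq_dist _ (by rw [Walk.length_cons, hp, h])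
  have := (hG.existsUnique_path v w).unique (hpath hx p hp hxw) (hpath hy q hq hyw)
  simpa using congrArg Walk.snd this

lemma Connected.exists_dist_eq_of_dist_eq_add (hG : G.Connected) {i j : ℕ}
    (h : G.dist u w = i + j) : ∃ m, G.dist u m = i ∧ G.dist m w = j := by
  obtain ⟨p, -, hp⟩ := hG.exists_path_of_dist u w
  refine ⟨p.getVert i, ?_⟩
  have h1 := dist_le (p.take i)
  have h2 := dist_le (p.drop i)
  have h3 : G.dist u w ≤ G.dist u (p.getVert i) + G.dist (p.getVert i) w := hG.dist_triangle
  rw [Walk.take_length] at h1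
  rw [Walk.drop_length] at h2
  omega

lemma IsTree.even_dist_of_dist_eq (hG : G.IsTree) {x : α} (h : G.dist x u = G.dist x w) :
    Even (G.dist u w) := by
  obtain ⟨z, huw, hux, hwx⟩ := hG.exists_median u w x
  rw [dist_comm, hux, dist_comm (u := x), hwx] at h
  exact ⟨G.dist u z, by rw [huw, dist_comm (u := z)]; omega⟩

end SimpleGraph

section Branches

variable {α : Type*} {T : SimpleGraph α} {S : Set α} {v x y a b m w z : α}

lemma mem_branch_iff : w ∈ Branch T v x ↔ T.dist v w = T.dist x w + 1 := Iff.rfl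

lemma ne_of_mem_branch (hw : w ∈ Branch T v x) : w ≠ v := by
  rintro rfl
  rw [mem_branch_iff, dist_self] at hw
  omega

lemma eq_of_mem_branch_of_dist_eq_one (hT : T.Connected) (hw : w ∈ Branch T v x)
    (h : T.dist v w = 1) : w = x := by
  rw [mem_branch_iff] at hw
  exact (hT.dist_eq_zero_iff.mp (by omega)).symm

lemma exists_adj_mem_branch (hT : T.Connected) (hw : w ≠ v) :
    ∃ x, T.Adj v x ∧ w ∈ Branch T v x :=
  hT.exists_adj_dist_eq_add_one hw.symm

lemma eq_of_mem_branch (hT : T.IsTree) (hx : T.Adj v x) (hy : T.Adj v y)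
    (hwx : w ∈ Branch T v x) (hwy : w ∈ Branch T v y) : x = y :=
  hT.eq_of_adj_of_dist_eq_add_one hx hy hwx hwy

lemma dist_lt_of_mem_branch (hT : T.Connected) (ha : a ∈ Branch T v x)
    (hb : b ∈ Branch T v x) : T.dist a b < T.dist a v + T.dist v b := by
  have : T.dist a b ≤ T.dist a x + T.dist x b := hT.dist_triangle
  have : T.dist a x = T.dist x a := dist_comm
  have : T.dist a v = T.dist v a := dist_comm
  rw [mem_branch_iff] at ha hb
  omega

lemma mem_branch_of_farther (hT : T.Connected) (hx : T.Adj v x) (ha : a ∈ Branch T v x)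
    (h : T.dist v b = T.dist v a + T.dist a b) : b ∈ Branch T v x := by
  have h1 : T.dist x b ≤ T.dist x a + T.dist a b := hT.dist_triangle
  have h2 : T.dist v b ≤ T.dist v x + T.dist x b := hT.dist_triangle
  have h3 : T.dist x b ≤ T.dist x v + T.dist v b := hT.dist_triangle
  rw [dist_eq_one_iff_adj.mpr hx.symm] at h3
  rw [dist_eq_one_iff_adj.mpr hx] at h2
  rw [mem_branch_iff] at ha ⊢
  omega

lemma mem_branch_of_between (hT : T.IsTree) (hx : T.Adj v x) (hm : m ∈ Branch T v x)
    (h : T.dist v m = T.dist v z + T.dist z m) (hz : z ≠ v) : z ∈ Branch T v x := by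
  obtain ⟨y, hy, hzy⟩ := exists_adj_mem_branch hT.connected hz
  obtain rfl : y = x := eq_of_mem_branch hT hy hx (mem_branch_of_farther hT.connected hy hzy h) hm
  exact hzy

lemma dist_eq_add_of_mem_branch_of_mem_branch (hT : T.IsTree) (hx : T.Adj v x)
    (hy : T.Adj v y) (hxy : x ≠ y) (ha : a ∈ Branch T v x) (hb : b ∈ Branch T v y) :
    T.dist a b = T.dist a v + T.dist v b := by
  obtain ⟨z, hva, hvb, hab⟩ := hT.exists_median v a b
  by_contra hne
  have hzv : z ≠ v := by
    rintro rfl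
    exact hne hab
  exact hxy (eq_of_mem_branch hT hx hy (mem_branch_of_between hT hx ha hva hzv)
    (mem_branch_of_between hT hy hb hvb hzv))

lemma ne_of_mem_branch_of_dist_eq_add (hT : T.Connected) (ha : a ∈ Branch T z x)
    (hb : b ∈ Branch T z y) (h : T.dist a b = T.dist a z + T.dist z b) : x ≠ y := by
  rintro rfl
  have : T.dist a b ≤ T.dist a x + T.dist x b := hT.dist_triangle
  have : T.dist a x = T.dist x a := dist_comm
  have : T.dist a z = T.dist z a := dist_comm
  rw [mem_branch_iff] at ha hb
  omega

lemma nontrivial_inter_union_of_nonempty (hT : T.IsTree) (hx : T.Adj v x) (hy : T.Adj v y)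
    (hxy : x ≠ y) (hSx : (S ∩ Branch T v x).Nonempty) (hSy : (S ∩ Branch T v y).Nonempty) :
    (S ∩ (Branch T v x ∪ Branch T v y)).Nontrivial := by
  obtain ⟨a, haS, ha⟩ := hSx
  obtain ⟨b, hbS, hb⟩ := hSy
  exact ⟨a, ⟨haS, .inl ha⟩, b, ⟨hbS, .inr hb⟩,
    fun hab => hxy (eq_of_mem_branch hT hx hy ha (hab ▸ hb))⟩

end Branches

section Cores

variable {α : Type*} [Fintype α] {T : SimpleGraph α} [DecidableRel T.Adj] {v x y a b c w z : α}

lemma card_le_degree_of_forall_adj (s : Finset α) (h : ∀ x ∈ s, T.Adj v x) :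
    s.card ≤ T.degree v := by
  rw [← card_neighborFinset_eq_degree]
  exact Finset.card_le_card fun x hx => (mem_neighborFinset T v x).mpr (h x hx)

lemma exists_adj_notMem_of_card_lt (s : Finset α) (h : s.card < T.degree v) :
    ∃ x, T.Adj v x ∧ x ∉ s := by
  by_contra! H
  have := Finset.card_le_card fun x hx => H x ((mem_neighborFinset T v x).mp hx)
  rw [card_neighborFinset_eq_degree] at this
  omega

lemma isCore_of_adj (ha : T.Adj z a) (hb : T.Adj z b) (hc : T.Adj z c) (hab : a ≠ b)
    (hac : a ≠ c) (hbc : b ≠ c) : IsCore T z := by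
  classical
  have := card_le_degree_of_forall_adj (T := T) (v := z) {a, b, c} (by simp [ha, hb, hc])
  rwa [Finset.card_eq_three.mpr ⟨a, b, c, hab, hac, hbc, rfl⟩] at this

lemma eq_or_eq_or_eq_of_degree_eq_three (h : T.degree z = 3) (ha : T.Adj z a)
    (hb : T.Adj z b) (hc : T.Adj z c) (hab : a ≠ b) (hac : a ≠ c) (hbc : b ≠ c)
    (hx : T.Adj z x) : x = a ∨ x = b ∨ x = c := by
  classical
  by_contra! hx'
  have := card_le_degree_of_forall_adj (T := T) (v := z) {x, a, b, c} (by simp [ha, hb, hc, hx])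
  rw [Finset.card_insert_of_notMem (by simp [hx'.1, hx'.2.1, hx'.2.2]),
    Finset.card_eq_three.mpr ⟨a, b, c, hab, hac, hbc, rfl⟩] at this
  omega

lemma isCore_of_median (hT : T.IsTree) (hab : T.dist a b = T.dist a z + T.dist z b)
    (hac : T.dist a c = T.dist a z + T.dist z c) (hbc : T.dist b c = T.dist b z + T.dist z c)
    (ha : a ≠ z) (hb : b ≠ z) (hc : c ≠ z) : IsCore T z := by
  obtain ⟨x, hx, hax⟩ := exists_adj_mem_branch hT.connected ha
  obtain ⟨y, hy, hby⟩ := exists_adj_mem_branch hT.connected hb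
  obtain ⟨w, hw, hcw⟩ := exists_adj_mem_branch hT.connected hc
  exact isCore_of_adj hx hy hw (ne_of_mem_branch_of_dist_eq_add hT.connected hax hby hab)
    (ne_of_mem_branch_of_dist_eq_add hT.connected hax hcw hac)
    (ne_of_mem_branch_of_dist_eq_add hT.connected hby hcw hbc)

lemma IsStandardLeg.not_isCore (h : IsStandardLeg T v x) (hw : w ∈ Branch T v x) :
    ¬ IsCore T w := by
  have := h.2 w hw
  rw [IsCore]
  omega

lemma IsSmallCore.isCore (h : IsSmallCore T c) : IsCore T c := h.1.ge

lemma IsCore.isSmallCore_of_not_isRegularCore (hc : IsCore T c) (h : ¬ IsRegularCore T c) :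
    IsSmallCore T c :=
  not_not.mp fun hs => h ⟨hc, hs⟩

lemma IsSmallCore.not_between (hT : T.IsTree) (hc : IsSmallCore T c) (ha : IsCore T a)
    (hb : IsCore T b) (h : T.dist a b = T.dist a c + T.dist c b) (hca : a ≠ c) (hcb : b ≠ c) :
    False := by
  -- two of the three branches at `c` are legs, so at most one of them contains cores
  obtain ⟨hdeg, s, t, hst, hs, ht⟩ := hc
  obtain ⟨x, hx, hax⟩ := exists_adj_mem_branch hT.connected hca
  obtain ⟨y, hy, hby⟩ := exists_adj_mem_branch hT.connected hcb
  have hxs : x ≠ s := by rintro rfl; exact hs.1.not_isCore hax ha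
  have hxt : x ≠ t := by rintro rfl; exact ht.not_isCore hax ha
  rcases eq_or_eq_or_eq_of_degree_eq_three hdeg hs.1.1 ht.1 hx hst hxs.symm hxt.symm hy with
    rfl | rfl | rfl
  · exact hs.1.not_isCore hby hb
  · exact ht.not_isCore hby hb
  · exact ne_of_mem_branch_of_dist_eq_add hT.connected hax hby h rfl

end Cores

section Legs

variable {α : Type*} [Fintype α] {T : SimpleGraph α} [DecidableRel T.Adj] {S : Set α}
  {v x y p q u w : α}

lemma IsGLeg.adj (h : IsGLeg T v x) : T.Adj v x := h.elim (·.1) (·.1)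

lemma isGLeg_of_forall_not_isRegularCore (hT : T.IsTree) (hv : IsCore T v) (hx : T.Adj v x)
    (h : ∀ w ∈ Branch T v x, ¬ IsRegularCore T w) : IsGLeg T v x := by
  by_cases hcore : ∃ c ∈ Branch T v x, IsCore T c
  swap
  · simp only [not_exists, not_and] at hcore
    exact .inl ⟨hx, fun w hw => by have := hcore w hw; rw [IsCore] at this; omega⟩
  have small : ∀ w ∈ Branch T v x, IsCore T w → IsSmallCore T w := fun w hw hw' =>
    hw'.isSmallCore_of_not_isRegularCore (h w hw)
  obtain ⟨c, hc, hcc⟩ := hcore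
  refine .inr ⟨hx, c, hc, small c hc hcc, fun w hw hwc => ?_⟩
  by_contra hwc'
  obtain ⟨z, hvc, hvw, hcw⟩ := hT.exists_median v c w
  have hzv : z ≠ v := by
    rintro rfl
    exact (dist_lt_of_mem_branch hT.connected hc hw).ne hcw
  have hz := mem_branch_of_between hT hx hc hvc hzv
  rcases eq_or_ne z c with rfl | hzc
  · exact (small z hz hcc).not_between hT hv hwc hvw hzv.symm hwc'
  rcases eq_or_ne z w with rfl | hzw
  · exact (small z hz hwc).not_between hT hv hcc hvc hzv.symm hzc.symm
  · exact (small z hz (isCore_of_median hT hvc hvw hcw hzv.symm hzc.symm hzw.symm)).not_between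
      hT hcc hwc hcw hzc.symm hzw.symm

lemma IsLocalSet.inter_branch_nonempty_of_isModifiedLeg (hS : IsLocalSet T v S)
    (hx : IsModifiedLeg T v x) : (S ∩ Branch T v x).Nonempty := by
  obtain ⟨-, -, -, hmod, -⟩ := hS
  rcases hmod x hx with ⟨-, a, b, -, h | h⟩ | ⟨-, -, -, -, -, -, ⟨w, hw, -⟩, -⟩ |
      ⟨-, -, -, -, ⟨w, hw, -⟩, -⟩
  · exact ⟨a, by simp [h]⟩
  · exact ⟨b, by simp [h]⟩
  · exact ⟨w, hw⟩
  · exact ⟨w, hw⟩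

lemma IsLocalSet.isStandardLeg_of_inter_branch_eq_empty (hS : IsLocalSet T v S)
    (hx : IsGLeg T v x) (h : S ∩ Branch T v x = ∅) : IsStandardLeg T v x :=
  hx.resolve_right fun hm => (hS.inter_branch_nonempty_of_isModifiedLeg hm).ne_empty h

lemma IsLocalSet.inter_branch_nonempty (hS : IsLocalSet T v S) (hx : IsGLeg T v x)
    (hy : IsGLeg T v y) (hxy : x ≠ y) (h : S ∩ Branch T v x = ∅) :
    (S ∩ Branch T v y).Nonempty := by
  refine Set.nonempty_iff_ne_empty.mpr fun h' => ?_
  have hxs := hS.isStandardLeg_of_inter_branch_eq_empty hx h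
  have hys := hS.isStandardLeg_of_inter_branch_eq_empty hy h'
  obtain ⟨-, hS0, -⟩ := hS
  exact hS0 x y hxs hys hxy h h'

lemma IsLocalSet.inter_branch_nontrivial_of_isModifiedLeg (hS : IsLocalSet T v S)
    (hx : IsStandardLeg T v x) (h : S ∩ Branch T v x = ∅) (hy : IsModifiedLeg T v y) :
    (S ∩ Branch T v y).Nontrivial := by
  obtain ⟨-, -, -, hmod, hnoM1, -⟩ := hS
  rcases hmod y hy with hM1 | ⟨-, -, -, -, -, -, ⟨w₁, hw₁, w₂, hw₂, hne, -⟩, -⟩ |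
      ⟨-, -, -, -, hnt, -⟩
  · exact absurd hM1 (hnoM1 ⟨x, hx, h⟩ y hy)
  · exact ⟨w₁, hw₁, w₂, hw₂, hne⟩
  · exact hnt

lemma IsLocalSet.inter_branch_nontrivial_of_degree_eq_three (hS : IsLocalSet T v S)
    (hv : ¬ IsSmallCore T v) (hdeg : T.degree v = 3) (hx : IsGLeg T v x) (hy : IsGLeg T v y)
    (hxy : x ≠ y) (h : S ∩ Branch T v x = ∅) : (S ∩ Branch T v y).Nontrivial := by
  have hxs := hS.isStandardLeg_of_inter_branch_eq_empty hx h
  rcases hy with hys | hym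
  · have long : ∀ {s t}, s ≠ t → IsStandardLeg T v s → IsStandardLeg T v t → IsLongLeg T v s :=
      fun hst hs ht => ⟨hs, fun hb => hv ⟨hdeg, _, _, hst, ⟨hs, hb⟩, ht⟩⟩
    obtain ⟨-, -, -, -, -, hlong, -⟩ := hS
    exact hlong x (long hxy hxs hys) h y (long hxy.symm hys hxs) hxy.symm
  · exact hS.inter_branch_nontrivial_of_isModifiedLeg hxs h hym

lemma IsLocalSet.inter_branch_nontrivial_of_dist_eq (hT : T.Connected)
    (hS : IsLocalSet T v S) (hx : IsStandardLeg T v x) (h : S ∩ Branch T v x = ∅)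
    (hy : IsGLeg T v y) (hxy : x ≠ y) (hu : u ∈ Branch T v x) (hw : w ∈ Branch T v y)
    (hd : T.dist v u = T.dist v w) (hwS : w ∉ S) : (S ∩ Branch T v y).Nontrivial := by
  rcases hy with hys | hym
  swap
  · exact hS.inter_branch_nontrivial_of_isModifiedLeg hx h hym
  obtain ⟨-, hS0, -, -, -, hlong, hshort⟩ := hS
  by_cases hyshort : Branch T v y = {y}
  · rw [hyshort, Set.mem_singleton_iff] at hw
    subst hw
    refine (hS0 x w hx hys hxy h ?_).elim
    rw [SolS0, hyshort, Set.inter_singleton_eq_empty.mpr hwS]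
  by_cases hxshort : Branch T v x = {x}
  · rw [hxshort, Set.mem_singleton_iff] at hu
    subst hu
    have hwy : w = y := eq_of_mem_branch_of_dist_eq_one hT hw
      (by rw [← hd, dist_eq_one_iff_adj.mpr hx.1])
    subst hwy
    refine (hshort ⟨u, ⟨hx, hxshort⟩, h⟩ w ⟨hys, hyshort⟩).resolve_right fun h3 => hwS ?_
    exact (h3.symm ▸ Set.mem_singleton w : w ∈ S ∩ Branch T v w).1
  · exact hlong x ⟨hx, hxshort⟩ h y ⟨hys, hyshort⟩ hxy.symm

lemma IsLocalSet.inter_nontrivial_of_forall_isGLeg (hT : T.IsTree) (hS : IsLocalSet T v S)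
    (hv : IsRegularCore T v) {A : Set α} (s₀ : α)
    (hA : ∀ s, T.Adj v s → s ≠ s₀ → IsGLeg T v s ∧ Branch T v s ⊆ A) :
    (S ∩ A).Nontrivial := by
  classical
  have two : ∀ a b, T.Adj v a → T.Adj v b → a ≠ s₀ → b ≠ s₀ → a ≠ b →
      (S ∩ Branch T v a).Nonempty → (S ∩ Branch T v b).Nonempty → (S ∩ A).Nontrivial :=
    fun a b ha hb ha₀ hb₀ hab hSa hSb =>
      (nontrivial_inter_union_of_nonempty hT ha hb hab hSa hSb).mono
        (Set.inter_subset_inter_right _ (Set.union_subset (hA a ha ha₀).2 (hA b hb hb₀).2))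
  have one_empty : ∀ a b, T.Adj v a → T.Adj v b → a ≠ s₀ → b ≠ s₀ → a ≠ b →
      S ∩ Branch T v a = ∅ → (S ∩ A).Nontrivial := by
    intro a b ha hb ha₀ hb₀ hab h
    have hSb := hS.inter_branch_nonempty (hA a ha ha₀).1 (hA b hb hb₀).1 hab h
    rcases hv.1.eq_or_lt with hdeg | hdeg
    · exact (hS.inter_branch_nontrivial_of_degree_eq_three hv.2 hdeg.symm (hA a ha ha₀).1
        (hA b hb hb₀).1 hab h).mono (Set.inter_subset_inter_right _ (hA b hb hb₀).2)
    · obtain ⟨c, hc, hc'⟩ := exists_adj_notMem_of_card_lt {s₀, a, b}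
        (Finset.card_le_three.trans_lt hdeg)
      simp only [Finset.mem_insert, Finset.mem_singleton, not_or] at hc'
      exact two b c hb hc hb₀ hc'.1 (Ne.symm hc'.2.2) hSb
        (hS.inter_branch_nonempty (hA a ha ha₀).1 (hA c hc hc'.1).1 (Ne.symm hc'.2.1) h)
  obtain ⟨s₁, hs₁, hs₁'⟩ := exists_adj_notMem_of_card_lt {s₀}
    (by rw [Finset.card_singleton]; exact lt_of_lt_of_le (by norm_num) hv.1)
  obtain ⟨s₂, hs₂, hs₂'⟩ := exists_adj_notMem_of_card_lt {s₀, s₁}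
    (Finset.card_le_two.trans_lt hv.1)
  simp only [Finset.mem_insert, Finset.mem_singleton, not_or] at hs₁' hs₂'
  by_cases h₁ : S ∩ Branch T v s₁ = ∅
  · exact one_empty s₁ s₂ hs₁ hs₂ hs₁' hs₂'.1 (Ne.symm hs₂'.2) h₁
  by_cases h₂ : S ∩ Branch T v s₂ = ∅
  · exact one_empty s₂ s₁ hs₂ hs₁ hs₂'.1 hs₁' hs₂'.2 h₂
  exact two s₁ s₂ hs₁ hs₂ hs₁' hs₂'.1 (Ne.symm hs₂'.2) (Set.nonempty_iff_ne_empty.mpr h₁)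
    (Set.nonempty_iff_ne_empty.mpr h₂)

lemma IsLocalSet.inter_union_nontrivial_of_dist_eq (hT : T.IsTree) (hS : IsLocalSet T v S)
    (hp : IsGLeg T v p) (hq : IsGLeg T v q) (hpq : p ≠ q) (hu : u ∈ Branch T v p)
    (hw : w ∈ Branch T v q) (hd : T.dist v u = T.dist v w) (huS : u ∉ S) (hwS : w ∉ S) :
    (S ∩ (Branch T v p ∪ Branch T v q)).Nontrivial := by
  by_cases h₁ : S ∩ Branch T v p = ∅
  · exact (hS.inter_branch_nontrivial_of_dist_eq hT.connected
      (hS.isStandardLeg_of_inter_branch_eq_empty hp h₁) h₁ hq hpq hu hw hd hwS).mono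
      (Set.inter_subset_inter_right _ Set.subset_union_right)
  by_cases h₂ : S ∩ Branch T v q = ∅
  · exact (hS.inter_branch_nontrivial_of_dist_eq hT.connected
      (hS.isStandardLeg_of_inter_branch_eq_empty hq h₂) h₂ hp hpq.symm hw hu hd.symm huS).mono
      (Set.inter_subset_inter_right _ Set.subset_union_left)
  exact nontrivial_inter_union_of_nonempty hT hp.adj hq.adj hpq
    (Set.nonempty_iff_ne_empty.mpr h₁) (Set.nonempty_iff_ne_empty.mpr h₂)

end Legs

def RestrictsToLocalSets {α : Type*} [Fintype α] (T : SimpleGraph α) [DecidableRel T.Adj]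
    (L : Set α) : Prop :=
  ∀ v, IsRegularCore T v → IsLocalSet T v (L ∩ GLegVerts T v)

section Landmarks

variable {α : Type*} [Fintype α] {T : SimpleGraph α} [DecidableRel T.Adj] {L S : Set α}
  {v x m p q u w : α}

lemma RestrictsToLocalSets.inter_nontrivial (hL : RestrictsToLocalSets T L) (hT : T.IsTree)
    (hv : IsRegularCore T v) {A : Set α} (s₀ : α)
    (hA : ∀ s, T.Adj v s → s ≠ s₀ → IsGLeg T v s ∧ Branch T v s ⊆ A) : (L ∩ A).Nontrivial :=
  ((hL v hv).inter_nontrivial_of_forall_isGLeg hT hv s₀ hA).mono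
    (Set.inter_subset_inter_left _ Set.inter_subset_left)

lemma RestrictsToLocalSets.inter_branch_nontrivial (hL : RestrictsToLocalSets T L)
    (hT : T.IsTree) {v₀ x₀ : α} (hx₀ : T.Adj v₀ x₀)
    (hr : ∃ r ∈ Branch T v₀ x₀, IsRegularCore T r) : (L ∩ Branch T v₀ x₀).Nontrivial := by
  classical
  -- a regular core `v` of the branch farthest from `v₀`: the branches of `v` pointing away
  -- from `v₀` hold no regular core, so they are g-legs
  obtain ⟨v, hv, hmax⟩ := (Finset.univ.filter fun r => r ∈ Branch T v₀ x₀ ∧ IsRegularCore T r)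
    |>.exists_max_image (T.dist v₀) (by obtain ⟨r, hr⟩ := hr; exact ⟨r, by simpa using hr⟩)
  simp only [Finset.mem_filter, Finset.mem_univ, true_and, and_imp] at hv hmax
  obtain ⟨s₀, hs₀, hv₀⟩ := exists_adj_mem_branch hT.connected (ne_of_mem_branch hv.1).symm
  have far : ∀ s, T.Adj v s → s ≠ s₀ → ∀ y ∈ Branch T v s,
      T.dist v₀ y = T.dist v₀ v + T.dist v y := fun _ hs hne _ hy =>
    dist_eq_add_of_mem_branch_of_mem_branch hT hs₀ hs (Ne.symm hne) hv₀ hy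
  refine hL.inter_nontrivial hT hv.2 s₀ fun s hs hne => ⟨?_, fun y hy =>
    mem_branch_of_farther hT.connected hx₀ hv.1 (far s hs hne y hy)⟩
  refine isGLeg_of_forall_not_isRegularCore hT hv.2.1 hs fun y hy hyr => ?_
  have := hmax y (mem_branch_of_farther hT.connected hx₀ hv.1 (far s hs hne y hy)) hyr
  have := far s hs hne y hy
  rw [mem_branch_iff] at hy
  omega

lemma RestrictsToLocalSets.nontrivial (hL : RestrictsToLocalSets T L) (hT : T.IsTree)
    (hcore : ∃ v, IsRegularCore T v) : L.Nontrivial := by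
  obtain ⟨r, hr⟩ := hcore
  by_cases h : ∃ s, T.Adj r s ∧ ∃ y ∈ Branch T r s, IsRegularCore T y
  · obtain ⟨s, hs, hy⟩ := h
    exact (hL.inter_branch_nontrivial hT hs hy).mono Set.inter_subset_left
  simp only [not_exists, not_and] at h
  exact (hL.inter_nontrivial hT hr (A := Set.univ) r fun s hs _ =>
    ⟨isGLeg_of_forall_not_isRegularCore hT hr.1 hs (h s hs), Set.subset_univ _⟩).mono
    Set.inter_subset_left

lemma exists_isRegularCore_forall_isCore_eq (hT : T.IsTree) (hcore : ∃ v, IsRegularCore T v)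
    (hm : IsSmallCore T m) : ∃ v x, IsRegularCore T v ∧ T.Adj v x ∧ m ∈ Branch T v x ∧
      ∀ c ∈ Branch T v x, IsCore T c → c = m := by
  classical
  -- `v` is a regular core nearest to `m`
  obtain ⟨v, hv, hmin⟩ := (Finset.univ.filter (IsRegularCore T)).exists_min_image
    (T.dist · m) (by obtain ⟨r, hr⟩ := hcore; exact ⟨r, by simpa using hr⟩)
  simp only [Finset.mem_filter, Finset.mem_univ, true_and] at hv hmin
  obtain ⟨x, hx, hmx⟩ := exists_adj_mem_branch hT.connected fun (h : m = v) => hv.2 (h ▸ hm)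
  refine ⟨v, x, hv, hx, hmx, fun c hc hcc => by_contra fun hcm => ?_⟩
  have between : ∀ z, IsCore T z → T.dist v m = T.dist v z + T.dist z m → z ≠ v → z ≠ m →
      False := by
    intro z hz h hzv hzm
    by_cases hzr : IsRegularCore T z
    · have := hmin z hzr
      have := hT.connected.pos_dist_of_ne hzv.symm
      omega
    · exact (hz.isSmallCore_of_not_isRegularCore hzr).not_between hT hv.1 hm.isCore h
        hzv.symm hzm.symm
  obtain ⟨z, hvc, hvm, hcm'⟩ := hT.exists_median v c m
  have hzv : z ≠ v := by
    rintro rfl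
    exact (dist_lt_of_mem_branch hT.connected hc hmx).ne hcm'
  rcases eq_or_ne z m with rfl | hzm
  · exact hm.not_between hT hv.1 hcc hvc hzv.symm hcm
  rcases eq_or_ne z c with rfl | hzc
  · exact between z hcc hvm hzv hzm
  · exact between z (isCore_of_median hT hvc hvm hcm' hzv.symm hzc.symm hzm.symm) hvm hzv hzm

lemma mem_branch_union_of_dist_lt (hT : T.IsTree) (hx : T.Adj v x) (hm : m ∈ Branch T v x)
    (hcores : ∀ c ∈ Branch T v x, IsCore T c → c = m) (hdeg : T.degree m = 3)
    (hp : T.Adj m p) (hq : T.Adj m q) (hpq : p ≠ q) (hvp : v ∉ Branch T m p)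
    (hvq : v ∉ Branch T m q) {y : α} (hy : y ∈ Branch T v x) (hd : T.dist v m < T.dist v y) :
    y ∈ Branch T m p ∪ Branch T m q ∧ T.dist v y = T.dist v m + T.dist m y := by
  obtain ⟨z, hvm, hvy, hmy⟩ := hT.exists_median v m y
  have hzv : z ≠ v := by
    rintro rfl
    exact (dist_lt_of_mem_branch hT.connected hm hy).ne hmy
  rcases eq_or_ne z m with rfl | hzm
  · refine ⟨?_, hvy⟩
    have hyz : y ≠ z := by rintro rfl; omega
    obtain ⟨s, hs, hys⟩ := exists_adj_mem_branch hT.connected hyz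
    obtain ⟨t, ht, hvt⟩ := exists_adj_mem_branch hT.connected hzv.symm
    have hts := ne_of_mem_branch_of_dist_eq_add hT.connected hvt hys hvy
    rcases eq_or_eq_or_eq_of_degree_eq_three hdeg hp hq ht hpq
        (by rintro rfl; exact hvp hvt) (by rintro rfl; exact hvq hvt) hs with rfl | rfl | rfl
    · exact .inl hys
    · exact .inr hys
    · exact absurd rfl hts
  · have hzy : z ≠ y := by rintro rfl; omega
    exact absurd (hcores z (mem_branch_of_between hT hx hm hvm hzv)
      (isCore_of_median hT hvm hvy hmy hzv.symm hzm.symm hzy.symm)) hzm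

lemma IsShortLeg.eq_and_eq_of_dist_eq (hT : T.Connected) (hp : IsShortLeg T m p)
    (hu : u ∈ Branch T m p) (hw : w ∈ Branch T m q) (hd : T.dist m u = T.dist m w) :
    u = p ∧ w = q := by
  rw [hp.2, Set.mem_singleton_iff] at hu
  subst hu
  exact ⟨rfl, eq_of_mem_branch_of_dist_eq_one hT hw (hd ▸ dist_eq_one_iff_adj.mpr hp.1.1)⟩

lemma IsLocalSet.inter_union_nontrivial_of_mem_modifiedLeg (hT : T.IsTree) (hS : IsLocalSet T v S)
    (hx : T.Adj v x) (hm : IsSmallCore T m) (hmx : m ∈ Branch T v x)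
    (hcores : ∀ c ∈ Branch T v x, IsCore T c → c = m) (hp : T.Adj m p) (hq : T.Adj m q)
    (hpq : p ≠ q) (hvp : v ∉ Branch T m p) (hvq : v ∉ Branch T m q) (hpS : p ∉ S)
    (hqS : q ∉ S) : (S ∩ (Branch T m p ∪ Branch T m q)).Nontrivial := by
  have far := fun y (hy : y ∈ Branch T v x) hd =>
    mem_branch_union_of_dist_lt hT hx hmx hcores hm.1 hp hq hpq hvp hvq hy hd
  have pair : ∀ {u a b}, MLegPair T v x u a b → a ∉ S ∧ b ∉ S := by
    rintro u a b ⟨hu, hus, -, ha, hb, hda, hdb, -⟩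
    obtain rfl := hcores u hu hus.isCore
    have near : ∀ y ∈ Branch T v x, T.dist v y = T.dist v u + 1 → y ∉ S := by
      intro y hy hdy
      obtain ⟨hy' | hy', hdy'⟩ := far y hy (by omega)
      · rwa [eq_of_mem_branch_of_dist_eq_one hT.connected hy' (by omega)]
      · rwa [eq_of_mem_branch_of_dist_eq_one hT.connected hy' (by omega)]
    exact ⟨near a ha hda, near b hb hdb⟩
  -- types (m,1) and (m,3) would put `p` or `q` into `S`, and the two deep vertices of a
  -- type (m,2) solution lie below `p` and `q`
  obtain ⟨-, -, -, hmod, -⟩ := hS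
  rcases hmod x ⟨hx, m, hmx, hm, hcores⟩ with ⟨u, a, b, hab, h | h⟩ |
      ⟨u, a, b, hab, -, -, ⟨w₁, hw₁, w₂, hw₂, hne, hd₁, hd₂⟩, -⟩ | ⟨u, a, b, hab, -, h⟩
  · exact absurd (h.symm ▸ Set.mem_singleton a : a ∈ S ∩ Branch T v x).1 (pair hab).1
  · exact absurd (h.symm ▸ Set.mem_singleton b : b ∈ S ∩ Branch T v x).1 (pair hab).2
  · obtain rfl := hcores u hab.1 hab.2.1.isCore
    exact ⟨w₁, ⟨hw₁.1, (far w₁ hw₁.2 (by omega)).1⟩, w₂, ⟨hw₂.1, (far w₂ hw₂.2 (by omega)).1⟩,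
      hne⟩
  · exact (h.elim (pair hab).1 (pair hab).2).elim

lemma RestrictsToLocalSets.inter_union_nontrivial_of_isSmallCore
    (hL : RestrictsToLocalSets T L) (hT : T.IsTree) (hcore : ∃ v, IsRegularCore T v)
    (hm : IsSmallCore T m) (hp : T.Adj m p) (hq : T.Adj m q) (hpq : p ≠ q)
    (hpr : ∀ y ∈ Branch T m p, ¬ IsRegularCore T y) (hqr : ∀ y ∈ Branch T m q, ¬ IsRegularCore T y)
    (hu : u ∈ Branch T m p) (hw : w ∈ Branch T m q) (hd : T.dist m u = T.dist m w)
    (huL : u ∉ L) (hwL : w ∉ L) : (L ∩ (Branch T m p ∪ Branch T m q)).Nontrivial := by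
  obtain ⟨v, x, hv, hx, hmx, hcores⟩ := exists_isRegularCore_forall_isCore_eq hT hcore hm
  obtain ⟨r, hr, hvr⟩ := exists_adj_mem_branch hT.connected (ne_of_mem_branch hmx).symm
  have hrp : r ≠ p := by rintro rfl; exact hpr v hvr hv
  have hrq : r ≠ q := by rintro rfl; exact hqr v hvr hv
  obtain ⟨s, -, -, hs, -⟩ := hm.2
  have hsr : s ≠ r := by rintro rfl; exact hs.1.not_isCore hvr hv.1
  obtain ⟨rfl, rfl⟩ : u = p ∧ w = q := by
    rcases eq_or_eq_or_eq_of_degree_eq_three hm.1 hp hq hr hpq hrp.symm hrq.symm hs.1.1 with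
      rfl | rfl | rfl
    · exact hs.eq_and_eq_of_dist_eq hT.connected hu hw hd
    · exact (hs.eq_and_eq_of_dist_eq hT.connected hw hu hd.symm).symm
    · exact absurd rfl hsr
  exact ((hL v hv).inter_union_nontrivial_of_mem_modifiedLeg hT hx hm hmx hcores hp hq hpq
    (fun h => hrp (eq_of_mem_branch hT hr hp hvr h))
    (fun h => hrq (eq_of_mem_branch hT hr hq hvr h))
    (fun h => huL h.1) (fun h => hwL h.1)).mono
    (Set.inter_subset_inter_left _ Set.inter_subset_left)

lemma RestrictsToLocalSets.inter_union_nontrivial (hL : RestrictsToLocalSets T L)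
    (hT : T.IsTree) (hcore : ∃ v, IsRegularCore T v) (hp : T.Adj m p) (hq : T.Adj m q)
    (hpq : p ≠ q) (hu : u ∈ Branch T m p) (hw : w ∈ Branch T m q)
    (hd : T.dist m u = T.dist m w) (huL : u ∉ L) (hwL : w ∉ L) :
    (L ∩ (Branch T m p ∪ Branch T m q)).Nontrivial := by
  by_cases hpr : ∃ y ∈ Branch T m p, IsRegularCore T y
  · exact (hL.inter_branch_nontrivial hT hp hpr).mono
      (Set.inter_subset_inter_right _ Set.subset_union_left)
  by_cases hqr : ∃ y ∈ Branch T m q, IsRegularCore T y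
  · exact (hL.inter_branch_nontrivial hT hq hqr).mono
      (Set.inter_subset_inter_right _ Set.subset_union_right)
  simp only [not_exists, not_and] at hpr hqr
  have hm : IsCore T m := by
    obtain ⟨r, hr⟩ := hcore
    by_contra hm
    obtain ⟨s, hs, hrs⟩ := exists_adj_mem_branch hT.connected fun h : r = m => hm (h ▸ hr.1)
    exact hm (isCore_of_adj hp hq hs hpq (by rintro rfl; exact hpr r hrs hr)
      (by rintro rfl; exact hqr r hrs hr))
  by_cases hmr : IsRegularCore T m
  · exact ((hL m hmr).inter_union_nontrivial_of_dist_eq hT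
      (isGLeg_of_forall_not_isRegularCore hT hm hp hpr)
      (isGLeg_of_forall_not_isRegularCore hT hm hq hqr) hpq hu hw hd (fun h => huL h.1)
      (fun h => hwL h.1)).mono (Set.inter_subset_inter_left _ Set.inter_subset_left)
  · exact hL.inter_union_nontrivial_of_isSmallCore hT hcore
      (hm.isSmallCore_of_not_isRegularCore hmr) hp hq hpq hpr hqr hu hw hd huL hwL

end Landmarks

section Separation

variable {α : Type*} {T : SimpleGraph α} {L A : Set α} {m p q u w τ : α}

lemma separates_of_mem_branch (hT : T.IsTree) (hp : T.Adj m p) (hq : T.Adj m q) (hpq : p ≠ q)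
    (hu : u ∈ Branch T m p) (hw : w ∈ Branch T m q) (hd : T.dist m u = T.dist m w)
    (hτ : τ ∈ Branch T m p) : Separates T τ u w := by
  have h₁ := dist_eq_add_of_mem_branch_of_mem_branch hT hp hq hpq hτ hw
  have h₂ : T.dist τ u ≤ T.dist τ p + T.dist p u := hT.connected.dist_triangle
  have : T.dist τ p = T.dist p τ := dist_comm
  have : T.dist τ m = T.dist m τ := dist_comm
  rw [mem_branch_iff] at hτ hu
  rw [Separates]
  omega

lemma separates_of_mem_union (hT : T.IsTree) (hp : T.Adj m p) (hq : T.Adj m q) (hpq : p ≠ q)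
    (hu : u ∈ Branch T m p) (hw : w ∈ Branch T m q) (hd : T.dist m u = T.dist m w)
    (hτ : τ ∈ Branch T m p ∪ Branch T m q) : Separates T τ u w :=
  hτ.elim (separates_of_mem_branch hT hp hq hpq hu hw hd) fun h =>
    (separates_of_mem_branch hT hq hp hpq.symm hw hu hd.symm h).symm

lemma hasTwoSeparators_of_nontrivial (h : (L ∩ A).Nontrivial)
    (hA : ∀ τ ∈ A, Separates T τ u w) : HasTwoSeparators T L u w := by
  obtain ⟨a, ha, b, hb, hab⟩ := h
  exact ⟨a, ha.1, b, hb.1, hab, hA a ha.2, hA b hb.2⟩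

end Separation

/-- in a tree with at least one regular core, if the restriction of `L`
to the g-legs of every regular core is a local set, then `L` is a landmark set. -/
theorem local_sets_give_landmark_set
    (T : SimpleGraph V) [DecidableRel T.Adj] (hT : T.IsTree)
    (hcore : ∃ v : V, IsRegularCore T v)
    (L : Set V)
    (hloc : ∀ v : V, IsRegularCore T v → IsLocalSet T v (L ∩ GLegVerts T v)) :
    IsLandmarkSet T L := by
  have hL : RestrictsToLocalSets T L := hloc
  intro u w huw huL hwL
  rcases Nat.even_or_odd (T.dist u w) with ⟨k, hk⟩ | hodd
  · obtain ⟨m, hum, hmw⟩ := hT.connected.exists_dist_eq_of_dist_eq_add hk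
    have hk0 : k ≠ 0 := by
      rintro rfl
      exact huw (hT.connected.dist_eq_zero_iff.mp hk)
    obtain ⟨p, hp, hup⟩ := exists_adj_mem_branch hT.connected fun h : u = m => hk0 (by
      rw [← hum, h, dist_self])
    obtain ⟨q, hq, hwq⟩ := exists_adj_mem_branch hT.connected fun h : w = m => hk0 (by
      rw [← hmw, h, dist_self])
    have hd : T.dist m u = T.dist m w := by rw [dist_comm, hum, hmw]
    have hpq := ne_of_mem_branch_of_dist_eq_add hT.connected hup hwq (by rw [hk, hum, hmw])
    exact hasTwoSeparators_of_nontrivial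
      (hL.inter_union_nontrivial hT hcore hp hq hpq hup hwq hd huL hwL)
      fun τ => separates_of_mem_union hT hp hq hpq hup hwq hd
  · exact hasTwoSeparators_of_nontrivial (A := Set.univ) (by simpa using hL.nontrivial hT hcore)
      fun τ _ h => Nat.not_even_iff_odd.mpr hodd (hT.even_dist_of_dist_eq h)
end
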